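/- arXiv:2405.08266 — 3 statements merged into one kernel-verified Lean document; each statement's English description precedes it below -/
import Mathlib

section
/- Let G = A ⋊ ℤ be the discrete group where A = ℤ[1/2] = {m/2^k : m, k ∈ ℤ} is the additive group of dyadic rationals and n ∈ ℤ acts on A by multiplication by 2ⁿ (so G is the Baumslag–Solitar group BS(1,2)). Let S = {(2^m, 0) : m ∈ ℕ} ⊆ G. Then the characteristic function χ_S of S belongs to WAP(G) but not to WS(G); in particular, G is not a WS-group. -/
open BoundedContinuousFunction Topology Filter MeasureTheory

section DoubleOrbitDefs

variable {G : Type*} [Group G] [TopologicalSpace G] [IsTopologicalGroup G]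

/-- The two-sided translate `ₓf_y : z ↦ f (x * z * y)` of a bounded continuous function. -/
noncomputable def biTranslate (x y : G) (f : G →ᵇ ℂ) : G →ᵇ ℂ :=
  f.compContinuous ⟨fun z => x * z * y, ((continuous_mul_left x).mul continuous_const)⟩

@[simp] theorem biTranslate_apply (x y : G) (f : G →ᵇ ℂ) (z : G) :
    biTranslate x y f z = f (x * z * y) := rfl

/-- The double orbit `O(f) = {ₓf_y : x, y ∈ G}`. -/
def doubleOrbit (f : G →ᵇ ℂ) : Set (G →ᵇ ℂ) := {g | ∃ x y : G, g = biTranslate x y f}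

/-- The left orbit `{ₓf : x ∈ G}`. -/
def leftOrbit (f : G →ᵇ ℂ) : Set (G →ᵇ ℂ) := {g | ∃ x : G, g = biTranslate x 1 f}

/-- A set of bounded continuous functions is relatively weakly compact if its closure in
the weak topology of `C_b(G)` is compact. -/
def RelWeaklyCompact (A : Set (G →ᵇ ℂ)) : Prop :=
  IsCompact (closure (toWeakSpace ℂ (G →ᵇ ℂ) '' A))

/-- `f` is weakly almost periodic: the left orbit is relatively weakly compact. -/
def IsWAP (f : G →ᵇ ℂ) : Prop := RelWeaklyCompact (leftOrbit f)

/-- `f` is strictly weakly almost periodic: the double orbit is relatively weakly compact. -/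
def IsWS (f : G →ᵇ ℂ) : Prop := RelWeaklyCompact (doubleOrbit f)

/-- `f` is almost periodic: the double orbit is relatively norm compact. -/
def IsAP (f : G →ᵇ ℂ) : Prop := IsCompact (closure (doubleOrbit f))

/-- `f` is strictly uniformly continuous: the double orbit is equicontinuous on `G`. -/
def IsUCS (f : G →ᵇ ℂ) : Prop :=
  Equicontinuous (fun p : G × G => fun z : G => f (p.1 * z * p.2))

/-- `f` is left uniformly continuous. -/
def IsLUC (f : G →ᵇ ℂ) : Prop :=
  ∀ ε > (0 : ℝ), ∃ U ∈ 𝓝 (1 : G), ∀ s t : G, s * t⁻¹ ∈ U → dist (f s) (f t) < ε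

/-- `f` is right uniformly continuous. -/
def IsRUC (f : G →ᵇ ℂ) : Prop :=
  ∀ ε > (0 : ℝ), ∃ U ∈ 𝓝 (1 : G), ∀ s t : G, t⁻¹ * s ∈ U → dist (f s) (f t) < ε

/-- `f` is (two-sided) uniformly continuous. -/
def IsUC (f : G →ᵇ ℂ) : Prop := IsLUC f ∧ IsRUC f

/-- A subset of `G` is invariant if it is stable under all inner automorphisms. -/
def IsInvariantSet (V : Set G) : Prop := ∀ x : G, (fun g => x * g * x⁻¹) '' V = V

/-- A mean on `WAP(G)`: a positive linear functional with `m 1 = 1`, defined (at least)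
on the weakly almost periodic functions. -/
def IsMeanOnWAP (m : (G →ᵇ ℂ) → ℂ) : Prop :=
  (∀ f g : G →ᵇ ℂ, IsWAP f → IsWAP g → m (f + g) = m f + m g) ∧
  (∀ (c : ℂ) (f : G →ᵇ ℂ), IsWAP f → m (c • f) = c * m f) ∧
  m 1 = 1 ∧
  (∀ f : G →ᵇ ℂ, IsWAP f → (∀ z : G, 0 ≤ (f z).re ∧ (f z).im = 0) →
    0 ≤ (m f).re ∧ (m f).im = 0)

/-- A left-invariant mean on `WAP(G)`. -/
def IsLeftInvariantMeanOnWAP (m : (G →ᵇ ℂ) → ℂ) : Prop :=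
  IsMeanOnWAP m ∧ ∀ (x : G) (f : G →ᵇ ℂ), IsWAP f → m (biTranslate x 1 f) = m f

end DoubleOrbitDefs

/-- `G` is an IN-group: it has a compact invariant neighborhood of the identity. -/
def IsINGroup (G : Type*) [Group G] [TopologicalSpace G] : Prop :=
  ∃ V : Set G, IsCompact V ∧ V ∈ 𝓝 (1 : G) ∧ ∀ x : G, (fun g => x * g * x⁻¹) '' V = V

/-- `G` is a SIN-group: the invariant neighborhoods of the identity form a neighborhood
basis at the identity. -/
def IsSINGroup (G : Type*) [Group G] [TopologicalSpace G] : Prop :=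
  ∀ U ∈ 𝓝 (1 : G), ∃ V ∈ 𝓝 (1 : G), V ⊆ U ∧ ∀ x : G, (fun g => x * g * x⁻¹) '' V = V

/-- The intersection of all closed invariant neighborhoods of the identity of `G`. -/
def invClosedNbhdCore (G : Type*) [Group G] [TopologicalSpace G] : Set G :=
  ⋂₀ {V : Set G | IsClosed V ∧ V ∈ 𝓝 (1 : G) ∧ ∀ x : G, (fun g => x * g * x⁻¹) '' V = V}

/-- `x ∈ ℚ` is a dyadic rational, i.e. `x ∈ ℤ[1/2]`. -/
def IsDyadic (x : ℚ) : Prop := ∃ m k : ℤ, x = (m : ℚ) * (2 : ℚ) ^ k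

theorem IsDyadic.add {x y : ℚ} (hx : IsDyadic x) (hy : IsDyadic y) : IsDyadic (x + y) := by
  obtain ⟨m, k, rfl⟩ := hx
  obtain ⟨m', k', rfl⟩ := hy
  refine ⟨m * 2 ^ (k - min k k').toNat + m' * 2 ^ (k' - min k k').toNat, min k k', ?_⟩
  push_cast
  rw [← zpow_natCast (2 : ℚ) (k - min k k').toNat, ← zpow_natCast (2 : ℚ) (k' - min k k').toNat,
    Int.toNat_of_nonneg (by omega), Int.toNat_of_nonneg (by omega), add_mul,
    mul_assoc, mul_assoc, ← zpow_add₀ (two_ne_zero) (k - min k k'),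
    ← zpow_add₀ (two_ne_zero) (k' - min k k')]
  ring_nf

theorem IsDyadic.zpow_mul (n : ℤ) {x : ℚ} (hx : IsDyadic x) : IsDyadic ((2 : ℚ) ^ n * x) := by
  obtain ⟨m, k, rfl⟩ := hx
  exact ⟨m, k + n, by rw [zpow_add₀ (two_ne_zero : (2:ℚ) ≠ 0)]; ring⟩

theorem IsDyadic.neg {x : ℚ} (hx : IsDyadic x) : IsDyadic (-x) := by
  obtain ⟨m, k, rfl⟩ := hx
  exact ⟨-m, k, by push_cast; ring⟩

/-- The Baumslag–Solitar group `BS(1,2) = ℤ[1/2] ⋊ ℤ`, where `n ∈ ℤ` acts on the dyadic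
rationals by multiplication by `2ⁿ`: elements are pairs `(a, n)` with `a ∈ ℤ[1/2]`, `n ∈ ℤ`,
and `(a, n)(a', n') = (a + 2ⁿ a', n + n')`. -/
@[ext] structure BS12 : Type where
  a : ℚ
  n : ℤ
  ha : IsDyadic a

namespace BS12

noncomputable instance : Mul BS12 :=
  ⟨fun g g' => ⟨g.a + (2 : ℚ) ^ g.n * g'.a, g.n + g'.n, g.ha.add (g'.ha.zpow_mul g.n)⟩⟩

instance : One BS12 := ⟨⟨0, 0, ⟨0, 0, by norm_num⟩⟩⟩

noncomputable instance : Inv BS12 :=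
  ⟨fun g => ⟨-((2 : ℚ) ^ (-g.n) * g.a), -g.n, (g.ha.zpow_mul (-g.n)).neg⟩⟩

@[simp] theorem mul_a (g g' : BS12) : (g * g').a = g.a + (2 : ℚ) ^ g.n * g'.a := rfl
@[simp] theorem mul_n (g g' : BS12) : (g * g').n = g.n + g'.n := rfl
@[simp] theorem one_a : (1 : BS12).a = 0 := rfl
@[simp] theorem one_n : (1 : BS12).n = 0 := rfl
@[simp] theorem inv_a (g : BS12) : (g⁻¹).a = -((2 : ℚ) ^ (-g.n) * g.a) := rfl
@[simp] theorem inv_n (g : BS12) : (g⁻¹).n = -g.n := rfl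

noncomputable instance : Group BS12 where
  mul_assoc g₁ g₂ g₃ := by
    ext
    · simp [zpow_add₀ (two_ne_zero : (2:ℚ) ≠ 0)]; ring
    · simp [add_assoc]
  one_mul g := by ext <;> simp
  mul_one g := by ext <;> simp
  inv_mul_cancel g := by ext <;> simp

instance : TopologicalSpace BS12 := ⊥
instance : DiscreteTopology BS12 := ⟨rfl⟩
instance : IsTopologicalGroup BS12 where
  continuous_mul := continuous_of_discreteTopology
  continuous_inv := continuous_of_discreteTopology

/-- The subset `S = {(2^m, 0) : m ∈ ℕ}` of `BS(1,2)`. -/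
def S : Set BS12 := {g : BS12 | ∃ m : ℕ, g.a = (2 : ℚ) ^ m ∧ g.n = 0}

/-- The characteristic function of `S`, as a bounded (continuous) function on the discrete
group `BS(1,2)`. -/
noncomputable def chiS : BoundedContinuousFunction BS12 ℂ :=
  BoundedContinuousFunction.ofNormedAddCommGroup (Set.indicator S fun _ => (1 : ℂ))
    continuous_of_discreteTopology 1
    (by
      intro x
      by_cases hx : x ∈ S <;> simp [Set.indicator_apply, hx])

end BS12



section Ind
variable {X : Type*} [TopologicalSpace X] [DiscreteTopology X]

/-- indicator function as a bounded continuous function on a discrete space -/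
noncomputable def bcfInd (A : Set X) : X →ᵇ ℂ :=
  BoundedContinuousFunction.ofNormedAddCommGroup (Set.indicator A fun _ => (1 : ℂ))
    continuous_of_discreteTopology 1
    (by intro x; by_cases hx : x ∈ A <;> simp [hx])

theorem bcfInd_coe (A : Set X) : ⇑(bcfInd A) = Set.indicator A (fun _ => (1:ℂ)) := rfl

theorem bcfInd_apply_of_mem {A : Set X} {z : X} (h : z ∈ A) : bcfInd A z = 1 := by
  rw [bcfInd_coe, Set.indicator_of_mem h]

theorem bcfInd_apply_of_not_mem {A : Set X} {z : X} (h : z ∉ A) : bcfInd A z = 0 := by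
  rw [bcfInd_coe, Set.indicator_of_notMem h]

theorem bcfInd_apply_eq_one_iff {A : Set X} {z : X} : bcfInd A z = 1 ↔ z ∈ A := by
  constructor
  · intro h
    by_contra hz
    rw [bcfInd_apply_of_not_mem hz] at h
    exact one_ne_zero h.symm
  · exact bcfInd_apply_of_mem

theorem bcfInd_injective : Function.Injective (bcfInd (X := X)) := by
  intro A B h
  ext z
  constructor
  · intro hz
    exact bcfInd_apply_eq_one_iff.1 (h ▸ bcfInd_apply_of_mem hz)
  · intro hz
    exact bcfInd_apply_eq_one_iff.1 (h ▸ bcfInd_apply_of_mem hz : bcfInd A z = 1)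

theorem norm_bcfInd_le (A : Set X) : ‖bcfInd A‖ ≤ 1 :=
  BoundedContinuousFunction.norm_ofNormedAddCommGroup_le _ zero_le_one _

theorem bcfInd_union {A B : Set X} (h : Disjoint A B) :
    bcfInd (A ∪ B) = bcfInd A + bcfInd B := by
  ext z
  rcases Set.indicator_union_of_disjoint h (fun _ => (1:ℂ)) with hsplit
  simpa [bcfInd_coe] using congrFun hsplit z

@[simp] theorem bcfInd_empty : bcfInd (∅ : Set X) = 0 := by
  ext z
  simp [bcfInd_apply_of_not_mem]

theorem bcfInd_finset (t : Finset X) : bcfInd (↑t : Set X) = ∑ z ∈ t, bcfInd {z} := by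
  classical
  induction t using Finset.induction_on with
  | empty => simp
  | insert a s ha ih =>
      rw [Finset.coe_insert, Set.insert_eq, bcfInd_union (by simpa using ha),
        Finset.sum_insert ha, ih]

theorem norm_sum_smul_bcfInd_le {ι : Type*} (B : ι → Set X)
    (hd : ∀ i j, i ≠ j → Disjoint (B i) (B j)) (s : Finset ι) (c : ι → ℂ)
    (hc : ∀ i, ‖c i‖ ≤ 1) : ‖∑ i ∈ s, c i • bcfInd (B i)‖ ≤ 1 := by
  classical
  refine (BoundedContinuousFunction.norm_le zero_le_one).2 fun z => ?_
  have hz : (∑ i ∈ s, c i • bcfInd (B i)) z = ∑ i ∈ s, c i * bcfInd (B i) z := by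
    simp
  rw [hz]
  by_cases hex : ∃ i ∈ s, z ∈ B i
  · obtain ⟨i₀, hi₀s, hi₀⟩ := hex
    rw [Finset.sum_eq_single_of_mem i₀ hi₀s ?_]
    · rw [bcfInd_apply_of_mem hi₀, mul_one]
      exact hc i₀
    · intro j hjs hj
      have : z ∉ B j := fun hzj => (Set.disjoint_left.1 (hd j i₀ hj) hzj) hi₀
      rw [bcfInd_apply_of_not_mem this, mul_zero]
  · push_neg at hex
    rw [Finset.sum_eq_zero fun i hi => by rw [bcfInd_apply_of_not_mem (hex i hi), mul_zero]]
    norm_num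

theorem sum_norm_clm_bcfInd_le {ι : Type*} (μ : (X →ᵇ ℂ) →L[ℂ] ℂ) (B : ι → Set X)
    (hd : ∀ i j, i ≠ j → Disjoint (B i) (B j)) (s : Finset ι) :
    ∑ i ∈ s, ‖μ (bcfInd (B i))‖ ≤ ‖μ‖ := by
  classical
  have hex : ∀ i, ∃ c : ℂ, ‖c‖ ≤ 1 ∧ c * μ (bcfInd (B i)) = (‖μ (bcfInd (B i))‖ : ℂ) := by
    intro i
    rcases eq_or_ne (μ (bcfInd (B i))) 0 with h | h
    · exact ⟨0, by norm_num, by simp [h]⟩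
    · refine ⟨(‖μ (bcfInd (B i))‖ : ℂ) / μ (bcfInd (B i)), ?_, by field_simp⟩
      rw [norm_div, Complex.norm_real, norm_norm, div_le_one (norm_pos_iff.2 h)]
  choose c hc1 hmul using hex
  have key : μ (∑ i ∈ s, c i • bcfInd (B i)) = ((∑ i ∈ s, ‖μ (bcfInd (B i))‖ : ℝ) : ℂ) := by
    rw [map_sum]
    push_cast
    refine Finset.sum_congr rfl fun i _ => ?_
    rw [ContinuousLinearMap.map_smul, smul_eq_mul, hmul]
  have h1 : ‖μ (∑ i ∈ s, c i • bcfInd (B i))‖ ≤ ‖μ‖ := by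
    calc ‖μ (∑ i ∈ s, c i • bcfInd (B i))‖
        ≤ ‖μ‖ * ‖∑ i ∈ s, c i • bcfInd (B i)‖ := μ.le_opNorm _
      _ ≤ ‖μ‖ * 1 := by
          gcongr
          exact norm_sum_smul_bcfInd_le B hd s c hc1
      _ = ‖μ‖ := mul_one _
  rw [key, Complex.norm_real, Real.norm_eq_abs,
    abs_of_nonneg (Finset.sum_nonneg fun i _ => norm_nonneg _)] at h1
  exact h1

theorem summable_norm_clm_bcfInd_singleton (μ : (X →ᵇ ℂ) →L[ℂ] ℂ) :
    Summable fun z : X => ‖μ (bcfInd {z})‖ := by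
  apply summable_of_sum_le (fun z => norm_nonneg _)
  intro u
  exact sum_norm_clm_bcfInd_le μ (fun z => {z})
    (fun i j hij => Set.disjoint_singleton.2 hij) u

theorem tendsto_clm_bcfInd_disjoint (μ : (X →ᵇ ℂ) →L[ℂ] ℂ) (B : ℕ → Set X)
    (hd : ∀ i j, i ≠ j → Disjoint (B i) (B j)) :
    Tendsto (fun k => μ (bcfInd (B k))) atTop (𝓝 0) := by
  have hsum : Summable fun k => ‖μ (bcfInd (B k))‖ := by
    apply summable_of_sum_le (fun k => norm_nonneg _)
    intro u
    exact sum_norm_clm_bcfInd_le μ B hd u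
  exact (hsum.of_norm).tendsto_atTop_zero

end Ind

section Key
variable {X : Type*} [TopologicalSpace X] [DiscreteTopology X]

theorem key_tendsto (𝒜 : Set (Set X))
    (h0 : ∅ ∈ 𝒜) (hsing : ∀ z : X, {z} ∈ 𝒜)
    (h1 : ∀ A ∈ 𝒜, ∀ B ∈ 𝒜, A ≠ B → (A ∩ B).Finite)
    (h2 : ∀ z z' : X, z ≠ z' → {A | A ∈ 𝒜 ∧ z ∈ A ∧ z' ∈ A}.Finite)
    (𝒱 : Ultrafilter (X →ᵇ ℂ)) (hK : bcfInd '' 𝒜 ∈ 𝒱) :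
    ∃ g ∈ bcfInd '' 𝒜, ∀ μ : (X →ᵇ ℂ) →L[ℂ] ℂ,
      Filter.Tendsto μ (𝒱 : Filter (X →ᵇ ℂ)) (𝓝 (μ g)) := by
  classical
  by_cases hpure : ∃ u : X →ᵇ ℂ, 𝒱 = pure u
  · obtain ⟨u, rfl⟩ := hpure
    have hu : u ∈ bcfInd '' 𝒜 := Ultrafilter.mem_pure.1 hK
    exact ⟨u, hu, fun μ => tendsto_pure_nhds μ u⟩
  push_neg at hpure
  have hinf : ∀ s ∈ 𝒱, s.Infinite := by
    intro s hs
    by_contra hninf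
    have hfin : s.Finite := Set.not_infinite.1 hninf
    obtain ⟨x, -, hx⟩ := Ultrafilter.eq_pure_of_finite_mem hfin hs
    exact hpure x hx
  -- the pointwise limit support
  set L : Set X := {z : X | {u : X →ᵇ ℂ | u z = 1} ∈ 𝒱} with hL
  have hLsub : L.Subsingleton := by
    intro z hz z' hz'
    by_contra hne
    have hW : (bcfInd '' 𝒜) ∩ ({u : X →ᵇ ℂ | u z = 1} ∩ {u | u z' = 1}) ∈ 𝒱 :=
      Filter.inter_mem hK (Filter.inter_mem hz hz')
    have hsubW : (bcfInd '' 𝒜) ∩ ({u : X →ᵇ ℂ | u z = 1} ∩ {u | u z' = 1})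
        ⊆ bcfInd '' {A | A ∈ 𝒜 ∧ z ∈ A ∧ z' ∈ A} := by
      rintro u ⟨⟨A, hA, rfl⟩, h1', h2'⟩
      exact ⟨A, ⟨hA, bcfInd_apply_eq_one_iff.1 h1', bcfInd_apply_eq_one_iff.1 h2'⟩, rfl⟩
    have : ((bcfInd '' 𝒜) ∩ ({u : X →ᵇ ℂ | u z = 1} ∩ {u | u z' = 1})).Finite :=
      ((h2 z z' hne).image _).subset hsubW
    exact hinf _ hW this
  have hLmem : L ∈ 𝒜 := by
    rcases hLsub.eq_empty_or_singleton with h | ⟨z, h⟩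
    · rw [h]; exact h0
    · rw [h]; exact hsing z
  refine ⟨bcfInd L, ⟨L, hLmem, rfl⟩, fun μ => ?_⟩
  rw [Metric.tendsto_nhds]
  intro ε hε
  -- tail control for atoms
  have hsummable : Summable fun z : X => μ (bcfInd {z}) :=
    (summable_norm_clm_bcfInd_singleton μ).of_norm
  obtain ⟨H, hH⟩ := summable_iff_vanishing_norm.1 hsummable (ε/4) (by positivity)
  -- good sets
  have hG1 : {u : X →ᵇ ℂ | ∀ z ∈ H, z ∉ L → u z ≠ 1} ∈ 𝒱 := by
    have : {u : X →ᵇ ℂ | ∀ z ∈ H, z ∉ L → u z ≠ 1} =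
        ⋂ z ∈ H, {u : X →ᵇ ℂ | z ∈ L ∨ u z ≠ 1} := by
      ext u
      simp only [Set.mem_setOf_eq, Set.mem_iInter]
      constructor
      · intro h z hzH
        by_cases hzL : z ∈ L
        · exact Or.inl hzL
        · exact Or.inr (h z hzH hzL)
      · intro h z hzH hzL
        rcases h z hzH with h' | h'
        · exact absurd h' hzL
        · exact h'
    rw [this]
    refine (Filter.biInter_finset_mem H).2 fun z hz => ?_
    by_cases hzL : z ∈ L
    · exact Filter.mem_of_superset Filter.univ_mem (fun u _ => Or.inl hzL)
    · have : {u : X →ᵇ ℂ | u z = 1}ᶜ ∈ 𝒱 := (Ultrafilter.compl_mem_iff_notMem).2 hzL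
      exact Filter.mem_of_superset this (fun u hu => Or.inr hu)
  have hG2 : {u : X →ᵇ ℂ | ∀ z ∈ L, u z = 1} ∈ 𝒱 := by
    rcases hLsub.eq_empty_or_singleton with h | ⟨z₀, h⟩
    · refine Filter.mem_of_superset Filter.univ_mem fun u _ z hz => ?_
      rw [h] at hz; exact absurd hz (Set.notMem_empty z)
    · have hz₀ : {u : X →ᵇ ℂ | u z₀ = 1} ∈ 𝒱 := by
        have : z₀ ∈ L := by rw [h]; exact rfl
        exact this
      refine Filter.mem_of_superset hz₀ fun u hu z hz => ?_
      rw [h] at hz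
      rw [Set.mem_singleton_iff.1 hz]
      exact hu
  -- the bad set is not in the ultrafilter
  have hT : {u : X →ᵇ ℂ | ε ≤ dist (μ u) (μ (bcfInd L))} ∩ (bcfInd '' 𝒜)
      ∩ {u : X →ᵇ ℂ | ∀ z ∈ H, z ∉ L → u z ≠ 1}
      ∩ {u : X →ᵇ ℂ | ∀ z ∈ L, u z = 1} ∉ 𝒱 := by
    intro hTmem
    set T := {u : X →ᵇ ℂ | ε ≤ dist (μ u) (μ (bcfInd L))} ∩ (bcfInd '' 𝒜)
      ∩ {u : X →ᵇ ℂ | ∀ z ∈ H, z ∉ L → u z ≠ 1}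
      ∩ {u : X →ᵇ ℂ | ∀ z ∈ L, u z = 1} with hTdef
    have hTinf : T.Infinite := hinf _ hTmem
    set φ : ℕ ↪ T := hTinf.natEmbedding with hφ
    have hchoice : ∀ k : ℕ, ∃ A, A ∈ 𝒜 ∧ bcfInd A = (φ k : X →ᵇ ℂ) := by
      intro k
      obtain ⟨⟨hA1, hA2⟩, hA3⟩ := (φ k).2
      obtain ⟨A, hA, hAe⟩ := hA1.2
      exact ⟨A, hA, hAe⟩
    choose A hA𝒜 hAeq using hchoice
    have hAinj : ∀ k l : ℕ, k ≠ l → A k ≠ A l := by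
      intro k l hkl he
      apply hkl
      have : (φ k : X →ᵇ ℂ) = (φ l : X →ᵇ ℂ) := by rw [← hAeq, ← hAeq, he]
      exact φ.injective (Subtype.ext this)
    -- properties of each A k
    have hdist : ∀ k, ε ≤ ‖μ (bcfInd (A k \ L))‖ := by
      intro k
      obtain ⟨⟨⟨hd, -⟩, -⟩, hg2⟩ := (φ k).2
      have hLsubA : L ⊆ A k := by
        intro z hz
        have := hg2 z hz
        rw [← hAeq] at this
        exact bcfInd_apply_eq_one_iff.1 this
      have hsplit : bcfInd (A k) = bcfInd (A k \ L) + bcfInd L := by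
        rw [← bcfInd_union Set.disjoint_sdiff_left, Set.diff_union_of_subset hLsubA]
      have : dist (μ (bcfInd (A k))) (μ (bcfInd L)) = ‖μ (bcfInd (A k \ L))‖ := by
        rw [dist_eq_norm, ← map_sub]
        congr 2
        rw [hsplit]
        abel
      rw [← this, hAeq]
      exact hd
    have havoid : ∀ k, ∀ z ∈ H, z ∉ L → z ∉ A k := by
      intro k z hzH hzL hzA
      obtain ⟨⟨-, hg1⟩, -⟩ := (φ k).2
      exact hg1 z hzH hzL (by rw [← hAeq]; exact bcfInd_apply_of_mem hzA)
    -- disjointification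
    set A' : ℕ → Set X := fun k => A k \ L with hA'
    have hA'fin : ∀ k l : ℕ, k ≠ l → (A' k ∩ A' l).Finite := by
      intro k l hkl
      refine (h1 (A k) (hA𝒜 k) (A l) (hA𝒜 l) (hAinj k l hkl)).subset ?_
      intro z hz
      exact ⟨hz.1.1, hz.2.1⟩
    set B : ℕ → Set X := fun k => A' k \ ⋃ (j : ℕ) (_ : j < k), A' j with hB
    have hBdisj : ∀ k l : ℕ, k ≠ l → Disjoint (B k) (B l) := by
      intro k l hkl
      rcases hkl.lt_or_gt with h | h
      · rw [Set.disjoint_left]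
        intro x hxk hxl
        exact hxl.2 (Set.mem_biUnion h hxk.1)
      · rw [Set.disjoint_left]
        intro x hxk hxl
        exact hxk.2 (Set.mem_biUnion h hxl.1)
    set F : ℕ → Set X := fun k => A' k ∩ ⋃ (j : ℕ) (_ : j < k), A' j with hF
    have hFfin : ∀ k, (F k).Finite := by
      intro k
      have : F k ⊆ ⋃ (j : ℕ) (_ : j < k), (A' k ∩ A' j) := by
        rintro x ⟨hx1, hx2⟩
        obtain ⟨j, hj, hxj⟩ := Set.mem_iUnion₂.1 hx2
        exact Set.mem_iUnion₂.2 ⟨j, hj, hx1, hxj⟩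
      refine Set.Finite.subset ?_ this
      exact Set.Finite.biUnion (Set.finite_Iio k) fun j hj => hA'fin k j (Nat.ne_of_gt hj)
    have hsplit2 : ∀ k, bcfInd (A' k) = bcfInd (B k) + bcfInd (F k) := by
      intro k
      rw [← bcfInd_union]
      · congr 1
        exact (Set.diff_union_inter (A' k) _).symm
      · exact Set.disjoint_sdiff_left.mono_right Set.inter_subset_right
    have hFH : ∀ k, Disjoint (hFfin k).toFinset H := by
      intro k
      rw [Finset.disjoint_left]
      intro z hzF hzH
      rw [Set.Finite.mem_toFinset] at hzF
      have hzA' : z ∈ A' k := hzF.1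
      exact havoid k z hzH hzA'.2 hzA'.1
    have hFsmall : ∀ k, ‖μ (bcfInd (F k))‖ < ε/4 := by
      intro k
      have : bcfInd (F k) = ∑ z ∈ (hFfin k).toFinset, bcfInd {z} := by
        rw [← bcfInd_finset, Set.Finite.coe_toFinset]
      rw [this, map_sum]
      exact hH _ (hFH k)
    have htend := tendsto_clm_bcfInd_disjoint μ B hBdisj
    rw [Metric.tendsto_atTop] at htend
    obtain ⟨k₀, hk₀⟩ := htend (ε/2) (by positivity)
    have hBk := hk₀ k₀ le_rfl
    rw [dist_zero_right] at hBk
    have : ‖μ (bcfInd (A' k₀))‖ ≤ ‖μ (bcfInd (B k₀))‖ + ‖μ (bcfInd (F k₀))‖ := by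
      rw [hsplit2 k₀, map_add]
      exact norm_add_le _ _
    have hfinal : ε ≤ ‖μ (bcfInd (A' k₀))‖ := hdist k₀
    linarith [hFsmall k₀]
  -- conclude
  have hcompl : {u : X →ᵇ ℂ | ε ≤ dist (μ u) (μ (bcfInd L))}ᶜ
      ∪ ((bcfInd '' 𝒜)ᶜ ∪ ({u : X →ᵇ ℂ | ∀ z ∈ H, z ∉ L → u z ≠ 1}ᶜ
        ∪ {u : X →ᵇ ℂ | ∀ z ∈ L, u z = 1}ᶜ)) ∈ 𝒱 := by
    have := (Ultrafilter.compl_mem_iff_notMem).2 hT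
    rw [Set.compl_inter, Set.compl_inter, Set.compl_inter] at this
    refine Filter.mem_of_superset this ?_
    intro u hu
    rcases hu with (((h|h)|h)|h)
    · exact Or.inl h
    · exact Or.inr (Or.inl h)
    · exact Or.inr (Or.inr (Or.inl h))
    · exact Or.inr (Or.inr (Or.inr h))
  have final : {u : X →ᵇ ℂ | dist (μ u) (μ (bcfInd L)) < ε} ∈ 𝒱 := by
    have hall := Filter.inter_mem (Filter.inter_mem hK (Filter.inter_mem hG1 hG2)) hcompl
    refine Filter.mem_of_superset hall ?_
    rintro u ⟨⟨hu1, hu2, hu3⟩, hu4⟩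
    rcases hu4 with h | (h | (h | h))
    · have h' : ¬ ε ≤ dist (μ u) (μ (bcfInd L)) := h
      exact not_le.1 h'
    · exact absurd hu1 h
    · exact absurd hu2 h
    · exact absurd hu3 h
  exact final
end Key

section Compact
variable {X : Type*} [TopologicalSpace X] [DiscreteTopology X]

theorem pairing_injective :
    Function.Injective ((topDualPairing ℂ (X →ᵇ ℂ)).flip) := by
  intro x y h
  by_contra hne
  obtain ⟨f, hf⟩ := SeparatingDual.exists_ne_zero (R := ℂ) (sub_ne_zero_of_ne hne)
  have : (topDualPairing ℂ (X →ᵇ ℂ)).flip x f = (topDualPairing ℂ (X →ᵇ ℂ)).flip y f := by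
    rw [h]
  simp only [LinearMap.flip_apply, topDualPairing_apply] at this
  rw [map_sub] at hf
  exact hf (sub_eq_zero_of_eq this)

instance weakspace_t2 : T2Space (WeakSpace ℂ (X →ᵇ ℂ)) :=
  (WeakBilin.isEmbedding (pairing_injective (X := X))).t2Space

theorem isCompact_weak_bcfInd (𝒜 : Set (Set X))
    (h0 : ∅ ∈ 𝒜) (hsing : ∀ z : X, {z} ∈ 𝒜)
    (h1 : ∀ A ∈ 𝒜, ∀ B ∈ 𝒜, A ≠ B → (A ∩ B).Finite)
    (h2 : ∀ z z' : X, z ≠ z' → {A | A ∈ 𝒜 ∧ z ∈ A ∧ z' ∈ A}.Finite) :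
    IsCompact (toWeakSpace ℂ (X →ᵇ ℂ) '' (bcfInd '' 𝒜)) := by
  rw [isCompact_iff_ultrafilter_le_nhds]
  intro 𝒰 h𝒰
  set e := toWeakSpace ℂ (X →ᵇ ℂ) with he
  set 𝒱 : Ultrafilter (X →ᵇ ℂ) := 𝒰.map e.symm with h𝒱
  have hK : bcfInd '' 𝒜 ∈ 𝒱 := by
    have himg : e '' (bcfInd '' 𝒜) ∈ 𝒰 := Filter.le_principal_iff.1 h𝒰
    refine Filter.mem_of_superset himg ?_
    rintro u ⟨v, hv, rfl⟩
    exact hv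
  obtain ⟨g, hg, htend⟩ := key_tendsto 𝒜 h0 hsing h1 h2 𝒱 hK
  refine ⟨e g, ⟨g, hg, rfl⟩, ?_⟩
  rw [← tendsto_id']
  refine (WeakBilin.tendsto_iff_forall_eval_tendsto (B := (topDualPairing ℂ (X →ᵇ ℂ)).flip)
    (pairing_injective (X := X))).2 ?_
  intro μ
  have h1' := htend μ
  rw [h𝒱, Ultrafilter.coe_map, Filter.tendsto_map'_iff] at h1'
  exact h1'
end Compact

namespace BS12

theorem isDyadic_zero : IsDyadic 0 := ⟨0, 0, by norm_num⟩

theorem isDyadic_two_pow (m : ℕ) : IsDyadic ((2:ℚ)^m) := ⟨2^m, 0, by push_cast; ring⟩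

/-- The element `(2^m, 0)` of `BS(1,2)`. -/
noncomputable def em (m : ℕ) : BS12 := ⟨(2:ℚ)^m, 0, isDyadic_two_pow m⟩

@[simp] theorem em_a (m : ℕ) : (em m).a = (2:ℚ)^m := rfl
@[simp] theorem em_n (m : ℕ) : (em m).n = 0 := rfl

theorem mem_S_iff (z : BS12) : z ∈ S ↔ ∃ m : ℕ, z.a = (2:ℚ)^m ∧ z.n = 0 := Iff.rfl

theorem finite_exp_diff {c : ℚ} (hc : c ≠ 0) :
    {m : ℕ | ∃ m' : ℕ, (2:ℚ)^m - (2:ℚ)^m' = c}.Finite := by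
  obtain ⟨N, hN⟩ := pow_unbounded_of_one_lt |c| (one_lt_two (α := ℚ))
  refine Set.Finite.subset (Set.finite_Iio (N+1)) ?_
  rintro m ⟨m', hm⟩
  simp only [Set.mem_Iio]
  by_contra hbig
  push_neg at hbig
  rcases lt_trichotomy m' m with hlt | heq | hgt
  · have e1 : (2:ℚ)^m' ≤ 2^(m-1) := pow_le_pow_right₀ (by norm_num) (by omega)
    have e2 : (2:ℚ)^N ≤ 2^(m-1) := pow_le_pow_right₀ (by norm_num) (by omega)
    have e3 : (2:ℚ)^m = 2^(m-1) * 2 := by rw [← pow_succ]; congr 1; omega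
    have e4 : (2:ℚ)^(m-1) ≤ c := by rw [← hm, e3]; linarith
    have : |c| < c := lt_of_lt_of_le hN (le_trans e2 e4)
    linarith [le_abs_self c]
  · rw [heq] at hm
    exact hc (by rw [← hm]; ring)
  · have e1 : (2:ℚ)^m ≤ 2^(m'-1) := pow_le_pow_right₀ (by norm_num) (by omega)
    have e2 : (2:ℚ)^N ≤ 2^(m'-1) := pow_le_pow_right₀ (by norm_num) (by omega)
    have e3 : (2:ℚ)^m' = 2^(m'-1) * 2 := by rw [← pow_succ]; congr 1; omega
    have e4 : (2:ℚ)^(m'-1) ≤ -c := by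
      have : c = (2:ℚ)^m - 2^m' := hm.symm
      rw [e3] at this
      linarith
    have : |c| < -c := lt_of_lt_of_le hN (le_trans e2 e4)
    linarith [neg_abs_le c]

theorem core1 (x x' : BS12) (h : x ≠ x') :
    ({z : BS12 | x * z ∈ S} ∩ {z : BS12 | x' * z ∈ S}).Finite := by
  by_cases hn : x.n = x'.n
  · have ha : x.a ≠ x'.a := fun hA => h (BS12.ext hA hn)
    have hc : x.a - x'.a ≠ 0 := sub_ne_zero_of_ne ha
    refine Set.Finite.subset ((finite_exp_diff hc).image (fun m => x⁻¹ * em m)) ?_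
    rintro z ⟨⟨m, hma, hmn⟩, ⟨m', hma', hmn'⟩⟩
    refine ⟨m, ⟨m', ?_⟩, ?_⟩
    · have h1 : x.a + (2:ℚ)^x.n * z.a = 2^m := by simpa using hma
      have h2 : x'.a + (2:ℚ)^x'.n * z.a = 2^m' := by simpa using hma'
      rw [← hn] at h2
      linarith
    · have hxz : x * z = em m := by
        ext
        · simpa using hma
        · simpa using hmn
      show x⁻¹ * em m = z
      rw [← hxz]
      exact inv_mul_cancel_left x z
  · refine Set.Finite.subset Set.finite_empty ?_
    rintro z ⟨⟨m, hma, hmn⟩, ⟨m', hma', hmn'⟩⟩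
    exfalso
    apply hn
    have e1 : x.n + z.n = 0 := by simpa using hmn
    have e2 : x'.n + z.n = 0 := by simpa using hmn'
    omega

theorem core2 (z z' : BS12) (h : z ≠ z') :
    {x : BS12 | x * z ∈ S ∧ x * z' ∈ S}.Finite := by
  by_cases hn : z.n = z'.n
  · have ha : z.a ≠ z'.a := fun hA => h (BS12.ext hA hn)
    have hc : (2:ℚ)^(-z.n) * (z.a - z'.a) ≠ 0 :=
      mul_ne_zero (zpow_ne_zero _ two_ne_zero) (sub_ne_zero_of_ne ha)
    refine Set.Finite.subset ((finite_exp_diff hc).image (fun m => em m * z⁻¹)) ?_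
    rintro x ⟨⟨m, hma, hmn⟩, ⟨m', hma', hmn'⟩⟩
    refine ⟨m, ⟨m', ?_⟩, ?_⟩
    · have h1 : x.a + (2:ℚ)^x.n * z.a = 2^m := by simpa using hma
      have h2 : x.a + (2:ℚ)^x.n * z'.a = 2^m' := by simpa using hma'
      have hxn : x.n = -z.n := by
        have : x.n + z.n = 0 := by simpa using hmn
        omega
      rw [hxn] at h1 h2
      linarith
    · have hxz : x * z = em m := by
        ext
        · simpa using hma
        · simpa using hmn
      show em m * z⁻¹ = x
      rw [← hxz]
      exact mul_inv_cancel_right x z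
  · refine Set.Finite.subset Set.finite_empty ?_
    rintro x ⟨⟨m, hma, hmn⟩, ⟨m', hma', hmn'⟩⟩
    exfalso
    apply hn
    have e1 : x.n + z.n = 0 := by simpa using hmn
    have e2 : x.n + z'.n = 0 := by simpa using hmn'
    omega

/-- The family of subsets of `BS12` used for the weak compactness argument. -/
def fam : Set (Set BS12) :=
  (Set.range fun x : BS12 => {z : BS12 | x * z ∈ S}) ∪
    ((Set.range fun z : BS12 => ({z} : Set BS12)) ∪ {(∅ : Set BS12)})

theorem fam_empty : (∅ : Set BS12) ∈ fam := Or.inr (Or.inr rfl)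

theorem fam_singleton (z : BS12) : ({z} : Set BS12) ∈ fam := Or.inr (Or.inl ⟨z, rfl⟩)

theorem fam_h1 : ∀ A ∈ fam, ∀ B ∈ fam, A ≠ B → (A ∩ B).Finite := by
  rintro A hA B hB hne
  rcases hB with ⟨x', rfl⟩ | (⟨w, rfl⟩ | hB)
  · rcases hA with ⟨x, rfl⟩ | (⟨w, rfl⟩ | hA)
    · have hxx : x ≠ x' := by rintro rfl; exact hne rfl
      exact core1 x x' hxx
    · exact (Set.finite_singleton w).subset Set.inter_subset_left
    · rw [Set.mem_singleton_iff] at hA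
      rw [hA]
      exact Set.finite_empty.subset (by simp)
  · exact (Set.finite_singleton w).subset Set.inter_subset_right
  · rw [Set.mem_singleton_iff] at hB
    rw [hB]
    exact Set.finite_empty.subset (by simp)

theorem fam_h2 : ∀ z z' : BS12, z ≠ z' →
    {A | A ∈ fam ∧ z ∈ A ∧ z' ∈ A}.Finite := by
  intro z z' hne
  refine Set.Finite.subset (((core2 z z' hne).image (fun x => {w : BS12 | x * w ∈ S}))) ?_
  rintro A ⟨hAfam, hz, hz'⟩
  rcases hAfam with ⟨x, rfl⟩ | (⟨w, rfl⟩ | hA)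
  · exact ⟨x, ⟨hz, hz'⟩, rfl⟩
  · exfalso
    rw [Set.mem_singleton_iff] at hz hz'
    exact hne (hz.trans hz'.symm)
  · rw [Set.mem_singleton_iff] at hA
    rw [hA] at hz
    exact absurd hz (Set.notMem_empty z)

theorem chiS_coe : ⇑chiS = Set.indicator S (fun _ => (1:ℂ)) := rfl

theorem biTranslate_chiS (x y : BS12) :
    biTranslate x y chiS = bcfInd {z : BS12 | x * z * y ∈ S} := by
  ext z
  rw [biTranslate_apply]
  calc chiS (x * z * y) = Set.indicator S (fun _ => (1:ℂ)) (x * z * y) := rfl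
    _ = (bcfInd {w : BS12 | x * w * y ∈ S}) z := by
        by_cases hz : x * z * y ∈ S
        · rw [Set.indicator_of_mem hz,
            bcfInd_apply_of_mem (show z ∈ {w : BS12 | x * w * y ∈ S} from hz)]
        · rw [Set.indicator_of_notMem hz,
            bcfInd_apply_of_not_mem (show z ∉ {w : BS12 | x * w * y ∈ S} from hz)]

theorem isWAP_chiS : IsWAP chiS := by
  have hcompact := isCompact_weak_bcfInd fam fam_empty fam_singleton fam_h1 fam_h2
  show IsCompact (closure (toWeakSpace ℂ (BS12 →ᵇ ℂ) '' leftOrbit chiS))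
  refine IsCompact.of_isClosed_subset hcompact isClosed_closure ?_
  refine closure_minimal ?_ hcompact.isClosed
  apply Set.image_mono
  rintro u ⟨x, rfl⟩
  refine ⟨{z : BS12 | x * z ∈ S}, Or.inl ⟨x, rfl⟩, ?_⟩
  rw [biTranslate_chiS]
  have hset : {w : BS12 | x * w * 1 ∈ S} = {w : BS12 | x * w ∈ S} := by
    ext w
    have h1 : x * w * 1 = x * w := mul_one _
    rw [Set.mem_setOf_eq, Set.mem_setOf_eq, h1]
  rw [hset]

end BS12

section LimitFunctional
variable {X : Type*} [TopologicalSpace X] [DiscreteTopology X]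

theorem exists_limit_functional (U : Ultrafilter ℕ) (p : ℕ → X) :
    ∃ μ : (X →ᵇ ℂ) →L[ℂ] ℂ, ∀ f : X →ᵇ ℂ,
      Filter.Tendsto (fun j => f (p j)) (U : Filter ℕ) (𝓝 (μ f)) := by
  have hex : ∀ f : X →ᵇ ℂ, ∃ w : ℂ,
      Filter.Tendsto (fun j => f (p j)) (U : Filter ℕ) (𝓝 w) := by
    intro f
    have hcomp : IsCompact (Metric.closedBall (0:ℂ) ‖f‖) := isCompact_closedBall _ _
    have hle : ↑(U.map (fun j => f (p j))) ≤ Filter.principal (Metric.closedBall (0:ℂ) ‖f‖) := by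
      rw [Filter.le_principal_iff, Ultrafilter.coe_map, Filter.mem_map]
      have : ∀ j : ℕ, f (p j) ∈ Metric.closedBall (0:ℂ) ‖f‖ := by
        intro j
        rw [Metric.mem_closedBall, dist_zero_right]
        exact f.norm_coe_le_norm (p j)
      exact Filter.mem_of_superset Filter.univ_mem (fun j _ => this j)
    obtain ⟨w, -, hw⟩ := hcomp.ultrafilter_le_nhds (U.map _) hle
    exact ⟨w, hw⟩
  choose Λ hΛ using hex
  have hadd : ∀ f g : X →ᵇ ℂ, Λ (f + g) = Λ f + Λ g := by
    intro f g
    refine tendsto_nhds_unique (hΛ (f+g)) ?_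
    have := (hΛ f).add (hΛ g)
    simpa using this
  have hsmul : ∀ (c : ℂ) (f : X →ᵇ ℂ), Λ (c • f) = c * Λ f := by
    intro c f
    refine tendsto_nhds_unique (hΛ (c • f)) ?_
    have := (hΛ f).const_mul c
    simpa using this
  have hbound : ∀ f : X →ᵇ ℂ, ‖Λ f‖ ≤ ‖f‖ := by
    intro f
    exact le_of_tendsto (hΛ f).norm
      (Filter.Eventually.of_forall fun j => f.norm_coe_le_norm (p j))
  refine ⟨LinearMap.mkContinuous
    { toFun := Λ, map_add' := hadd, map_smul' := fun c f => by simpa using hsmul c f }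
    1 (fun f => by simpa using hbound f), hΛ⟩

theorem clusterPt_eval {E : Type*} [NormedAddCommGroup E] [NormedSpace ℂ E]
    (h : WeakSpace ℂ E) (φ : ℕ → WeakSpace ℂ E)
    (hcl : ClusterPt h (Filter.map φ Filter.atTop))
    (μ : E →L[ℂ] ℂ) (w : ℂ)
    (htw : Filter.Tendsto (fun k => (topDualPairing ℂ E).flip (φ k) μ) Filter.atTop (𝓝 w)) :
    (topDualPairing ℂ E).flip h μ = w := by
  set q : WeakSpace ℂ E → ℂ := fun u => (topDualPairing ℂ E).flip u μ with hq
  have hqc : Continuous q := WeakBilin.eval_continuous _ μ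
  have hne : (𝓝 h ⊓ Filter.map φ Filter.atTop).NeBot := hcl
  have h1 : Filter.map q (𝓝 h ⊓ Filter.map φ Filter.atTop) ≤ 𝓝 (q h) ⊓ 𝓝 w := by
    refine le_inf ?_ ?_
    · exact le_trans (Filter.map_mono inf_le_left) (hqc.tendsto h)
    · refine le_trans (Filter.map_mono inf_le_right) ?_
      rw [Filter.map_map]
      exact htw
  have : (𝓝 (q h) ⊓ 𝓝 w).NeBot := Filter.neBot_of_le h1
  exact t2_iff_nhds.1 inferInstance this

end LimitFunctional

namespace BS12

theorem isDyadic_zero' : IsDyadic 0 := ⟨0, 0, by norm_num⟩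

/-- The element `(0, k)` of `BS(1,2)`. -/
noncomputable def tk (k : ℤ) : BS12 := ⟨0, k, isDyadic_zero'⟩

@[simp] theorem tk_a (k : ℤ) : (tk k).a = 0 := rfl
@[simp] theorem tk_n (k : ℤ) : (tk k).n = k := rfl

/-- The conjugated set appearing in the double orbit. -/
def Ck (k : ℕ) : Set BS12 := {z : BS12 | tk (-(k:ℤ)) * z * tk (k:ℤ) ∈ S}

theorem mem_Ck_iff (k : ℕ) (z : BS12) :
    z ∈ Ck k ↔ ∃ m : ℕ, (2:ℚ)^(-(k:ℤ)) * z.a = 2^m ∧ z.n = 0 := by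
  unfold Ck
  rw [Set.mem_setOf_eq, mem_S_iff]
  constructor
  · rintro ⟨m, hma, hmn⟩
    refine ⟨m, ?_, ?_⟩
    · simpa using hma
    · have : (-(k:ℤ) + z.n) + (k:ℤ) = 0 := by simpa using hmn
      omega
  · rintro ⟨m, hma, hmn⟩
    refine ⟨m, ?_, ?_⟩
    · simpa using hma
    · simp [hmn]

theorem em_mem_Ck {j k : ℕ} (hjk : k ≤ j) : em j ∈ Ck k := by
  rw [mem_Ck_iff]
  refine ⟨j - k, ?_, rfl⟩
  rw [em_a]
  have : (2:ℚ)^(j:ℕ) = (2:ℚ)^((j:ℤ)) := by rw [zpow_natCast]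
  rw [this, ← zpow_add₀ (two_ne_zero : (2:ℚ) ≠ 0)]
  have h2 : -(k:ℤ) + (j:ℤ) = ((j - k : ℕ) : ℤ) := by omega
  rw [h2, zpow_natCast]

theorem eventually_not_mem_Ck (z : BS12) : ∀ᶠ k in Filter.atTop, z ∉ Ck k := by
  obtain ⟨N, hN⟩ := pow_unbounded_of_one_lt |z.a| (one_lt_two (α := ℚ))
  rw [Filter.eventually_atTop]
  refine ⟨N, fun k hk hmem => ?_⟩
  rw [mem_Ck_iff] at hmem
  obtain ⟨m, hma, -⟩ := hmem
  have h1 : z.a = (2:ℚ)^(k:ℤ) * 2^m := by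
    have := congrArg (fun t => (2:ℚ)^(k:ℤ) * t) hma
    rw [← mul_assoc, ← zpow_add₀ (two_ne_zero : (2:ℚ) ≠ 0), add_neg_cancel, zpow_zero,
      one_mul] at this
    exact this
  have h2 : (2:ℚ)^(k:ℤ) = (2:ℚ)^(k:ℕ) := zpow_natCast 2 k
  have h3 : (1:ℚ) ≤ 2^m := one_le_pow₀ (by norm_num)
  have h4 : (2:ℚ)^N ≤ 2^k := pow_le_pow_right₀ (by norm_num) hk
  have h5 : (0:ℚ) < 2^k := by positivity
  have h6 : z.a ≤ |z.a| := le_abs_self _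
  rw [h2] at h1
  nlinarith

theorem not_isWS_chiS : ¬ IsWS chiS := by
  intro hWS
  set E := BS12 →ᵇ ℂ with hE
  set e := toWeakSpace ℂ E with he
  set φ : ℕ → WeakSpace ℂ E := fun k => e (bcfInd (Ck k)) with hφ
  have hbit : ∀ k : ℕ, biTranslate (tk (-(k:ℤ))) (tk (k:ℤ)) chiS = bcfInd (Ck k) := by
    intro k
    exact biTranslate_chiS _ _
  have hmem : ∀ k, φ k ∈ closure (e '' doubleOrbit chiS) := by
    intro k
    exact subset_closure ⟨bcfInd (Ck k), ⟨tk (-(k:ℤ)), tk (k:ℤ), (hbit k).symm⟩, rfl⟩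
  have hle : Filter.map φ Filter.atTop ≤ Filter.principal (closure (e '' doubleOrbit chiS)) := by
    rw [Filter.le_principal_iff, Filter.mem_map]
    exact Filter.mem_of_superset Filter.univ_mem (fun k _ => hmem k)
  haveI : (Filter.map φ Filter.atTop).NeBot := Filter.map_neBot
  have hWS' : IsCompact (closure (e '' doubleOrbit chiS)) := hWS
  obtain ⟨h, -, hcl⟩ := hWS' hle
  -- h is zero pointwise
  have hzero : ∀ z : BS12, (topDualPairing ℂ E).flip h (evalCLM ℂ z) = 0 := by
    intro z
    refine clusterPt_eval h φ hcl (evalCLM ℂ z) 0 ?_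
    have hev : ∀ k : ℕ, (topDualPairing ℂ E).flip (φ k) (evalCLM ℂ z) = bcfInd (Ck k) z :=
      fun k => rfl
    simp only [hev]
    have := eventually_not_mem_Ck z
    refine Filter.Tendsto.congr' ?_ tendsto_const_nhds
    filter_upwards [this] with k hk
    rw [bcfInd_apply_of_not_mem hk]
  -- but the limit functional gives 1
  obtain ⟨μ, hμ⟩ := exists_limit_functional (Filter.hyperfilter ℕ) em
  have hone : (topDualPairing ℂ E).flip h μ = 1 := by
    refine clusterPt_eval h φ hcl μ 1 ?_
    have hval : ∀ k : ℕ, (topDualPairing ℂ E).flip (φ k) μ = μ (bcfInd (Ck k)) := fun k => rfl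
    simp only [hval]
    have hconst : ∀ k : ℕ, μ (bcfInd (Ck k)) = 1 := by
      intro k
      refine tendsto_nhds_unique (hμ (bcfInd (Ck k))) ?_
      have hev : ∀ᶠ j in (Filter.hyperfilter ℕ : Filter ℕ), bcfInd (Ck k) (em j) = 1 := by
        have hcof : {j : ℕ | k ≤ j} ∈ (Filter.hyperfilter ℕ : Filter ℕ) := by
          apply Filter.hyperfilter_le_cofinite
          have : {j : ℕ | k ≤ j}ᶜ ⊆ Set.Iio k := by
            intro j hj
            simpa using hj
          exact Filter.mem_cofinite.2 ((Set.finite_Iio k).subset this)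
        filter_upwards [hcof] with j hj
        exact bcfInd_apply_of_mem (em_mem_Ck hj)
      exact Filter.Tendsto.congr' (by filter_upwards [hev] with j hj; rw [hj]) tendsto_const_nhds
    simp only [hconst]
    exact tendsto_const_nhds
  -- contradiction: h = e 0
  have hzfun : (toWeakSpace ℂ E).symm h = 0 := by
    ext z
    have := hzero z
    have hz' : evalCLM ℂ z ((toWeakSpace ℂ E).symm h) = 0 := this
    simpa using hz'
  have : (topDualPairing ℂ E).flip h μ = μ ((toWeakSpace ℂ E).symm h) := rfl
  rw [this, hzfun] at hone
  simp at hone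

end BS12

/-- In the Baumslag–Solitar group `G = ℤ[1/2] ⋊ ℤ = BS(1,2)` (discrete), the
characteristic function of `S = {(2^m, 0) : m ∈ ℕ}` is weakly almost periodic but not strictly
weakly almost periodic; in particular `G` is not a WS-group. -/
theorem stmt16 :
    IsWAP BS12.chiS ∧ ¬ IsWS BS12.chiS ∧
      {f : BoundedContinuousFunction BS12 ℂ | IsWS f} ≠ {f | IsWAP f} := by
  refine ⟨BS12.isWAP_chiS, BS12.not_isWS_chiS, ?_⟩
  intro heq
  have h1 : BS12.chiS ∈ {f : BoundedContinuousFunction BS12 ℂ | IsWAP f} := BS12.isWAP_chiS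
  rw [← heq] at h1
  exact BS12.not_isWS_chiS h1
end

section
/- Let G₃ be the ax+b group of pairs (b, a), b ∈ ℝ, a > 0, with multiplication (b, a)(b′, a′) = (b + ab′, aa′), and let N = {(b, 1) : b ∈ ℝ} be its closed normal subgroup, with θ : G₃ → G₃/N the quotient homomorphism. Then: (1) every f ∈ UCS(G₃) is constant on each coset of N in G₃; (2) WS(G₃) = {h ∘ θ : h ∈ WAP(G₃/N)}. -/
open BoundedContinuousFunction Topology Filter MeasureTheory

/-- The `ax + b` group `G₃`: pairs `(b, a)` with `b ∈ ℝ`, `a > 0`, multiplication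
`(b, a)(b', a') = (b + a b', a a')`, and the subspace topology from `ℝ²`. -/
@[ext] structure AxB : Type where
  b : ℝ
  a : ℝ
  ha : 0 < a

namespace AxB

noncomputable instance : Mul AxB :=
  ⟨fun g g' => ⟨g.b + g.a * g'.b, g.a * g'.a, mul_pos g.ha g'.ha⟩⟩

instance : One AxB := ⟨⟨0, 1, one_pos⟩⟩

noncomputable instance : Inv AxB :=
  ⟨fun g => ⟨-g.b / g.a, 1 / g.a, by have := g.ha; positivity⟩⟩

@[simp] theorem mul_b (g g' : AxB) : (g * g').b = g.b + g.a * g'.b := rfl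
@[simp] theorem mul_a (g g' : AxB) : (g * g').a = g.a * g'.a := rfl
@[simp] theorem one_b : (1 : AxB).b = 0 := rfl
@[simp] theorem one_a : (1 : AxB).a = 1 := rfl
@[simp] theorem inv_b (g : AxB) : (g⁻¹).b = -g.b / g.a := rfl
@[simp] theorem inv_a (g : AxB) : (g⁻¹).a = 1 / g.a := rfl

noncomputable instance : Group AxB where
  mul_assoc g₁ g₂ g₃ := by ext <;> simp <;> ring
  one_mul g := by ext <;> simp
  mul_one g := by ext <;> simp
  inv_mul_cancel g := by
    have := g.ha.ne'
    ext <;> simp <;> field_simp <;> ring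

/-- The topology on the `ax + b` group induced from `ℝ²`. -/
instance : TopologicalSpace AxB :=
  TopologicalSpace.induced (fun g => (g.b, g.a)) inferInstance

theorem continuous_param : Continuous fun g : AxB => (g.b, g.a) := continuous_induced_dom

theorem continuous_b : Continuous fun g : AxB => g.b := continuous_fst.comp continuous_param
theorem continuous_a : Continuous fun g : AxB => g.a := continuous_snd.comp continuous_param

instance : IsTopologicalGroup AxB where
  continuous_mul := by
    apply continuous_induced_rng.mpr
    exact ((continuous_b.comp continuous_fst).add
      ((continuous_a.comp continuous_fst).mul (continuous_b.comp continuous_snd))).prodMk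
      ((continuous_a.comp continuous_fst).mul (continuous_a.comp continuous_snd))
  continuous_inv := by
    apply continuous_induced_rng.mpr
    refine Continuous.prodMk ?_ ?_
    · exact (continuous_b.neg).div continuous_a fun g => g.ha.ne'
    · exact continuous_const.div continuous_a fun g => g.ha.ne'

end AxB

/-- The closed normal subgroup `N = {(b, 1) : b ∈ ℝ}` of the `ax + b` group. -/
noncomputable def AxB.N : Subgroup AxB where
  carrier := {g : AxB | g.a = 1}
  one_mem' := rfl
  mul_mem' := by
    intro g g' hg hg'
    show (g * g').a = 1
    simp only [AxB.mul_a]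
    rw [show g.a = 1 from hg, show g'.a = 1 from hg', one_mul]
  inv_mem' := by
    intro g hg
    show (g⁻¹).a = 1
    simp only [AxB.inv_a]
    rw [show g.a = 1 from hg]
    norm_num

instance : AxB.N.Normal := by
  constructor
  intro n hn g
  show (g * n * g⁻¹).a = 1
  have hg := g.ha.ne'
  simp only [AxB.mul_a, AxB.inv_a, show n.a = 1 from hn]
  field_simp

section Stage1
open TopologicalSpace

namespace AxB

theorem param_injective : Function.Injective (fun g : AxB => (g.b, g.a)) := by
  intro g g' h
  ext
  · exact congrArg Prod.fst h
  · exact congrArg Prod.snd h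

theorem isEmbedding_param : Topology.IsEmbedding (fun g : AxB => (g.b, g.a)) :=
  ⟨⟨rfl⟩, param_injective⟩

theorem range_param : Set.range (fun g : AxB => (g.b, g.a)) = {p : ℝ × ℝ | 0 < p.2} := by
  ext p
  constructor
  · rintro ⟨g, rfl⟩; exact g.ha
  · intro hp; exact ⟨⟨p.1, p.2, hp⟩, rfl⟩

theorem isOpenEmbedding_param : Topology.IsOpenEmbedding (fun g : AxB => (g.b, g.a)) := by
  refine ⟨isEmbedding_param, ?_⟩
  rw [range_param]
  exact isOpen_lt continuous_const continuous_snd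

instance : T2Space AxB := isEmbedding_param.t2Space

instance : LocallyCompactSpace AxB := isOpenEmbedding_param.locallyCompactSpace

instance : SecondCountableTopology AxB := isEmbedding_param.secondCountableTopology

instance : BaireSpace AxB := BaireSpace.of_t2Space_locallyCompactSpace

instance : Nonempty AxB := ⟨1⟩

theorem tendsto_one_of_param {u : ℕ → AxB}
    (hb : Filter.Tendsto (fun k => (u k).b) Filter.atTop (nhds 0))
    (ha : Filter.Tendsto (fun k => (u k).a) Filter.atTop (nhds 1)) :
    Filter.Tendsto u Filter.atTop (nhds (1 : AxB)) := by
  rw [isEmbedding_param.toIsInducing.tendsto_nhds_iff]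
  exact (hb.prodMk_nhds ha : _)

end AxB

/-- If the double orbit of `f` is "equicontinuous at 1", then `f` is constant on cosets of N. -/
theorem AxB.const_of_equicont_one (f : AxB →ᵇ ℂ)
    (H : ∀ ε : ℝ, 0 < ε → ∃ V ∈ nhds (1 : AxB),
      ∀ x y : AxB, ∀ w ∈ V, dist (f (x * w * y)) (f (x * y)) ≤ ε) :
    ∀ x y : AxB, x⁻¹ * y ∈ AxB.N → f x = f y := by
  intro x y hxy
  have hna : (x⁻¹ * y).a = 1 := hxy
  have hyn : y = x * (x⁻¹ * y) := by group
  have key : ∀ ε : ℝ, 0 < ε → dist (f x) (f y) ≤ ε := by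
    intro ε hε
    obtain ⟨V, hVn, hV⟩ := H ε hε
    have hpos : ∀ k : ℕ, (0:ℝ) < 1 / (k + 1) := by intro k; positivity
    have hwt : Filter.Tendsto (fun k : ℕ => (⟨(x⁻¹ * y).b / (k + 1), 1, one_pos⟩ : AxB))
        Filter.atTop (nhds (1 : AxB)) := by
      apply AxB.tendsto_one_of_param
      · show Filter.Tendsto (fun k : ℕ => (x⁻¹ * y).b / ((k:ℝ) + 1)) Filter.atTop (nhds 0)
        have h0 : Filter.Tendsto (fun k : ℕ => 1 / ((k:ℝ) + 1)) Filter.atTop (nhds 0) :=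
          tendsto_one_div_add_atTop_nhds_zero_nat
        have h1 := h0.const_mul ((x⁻¹ * y).b)
        rw [mul_zero] at h1
        convert h1 using 2 with k
        ring
      · show Filter.Tendsto (fun _ : ℕ => (1:ℝ)) Filter.atTop (nhds 1)
        exact tendsto_const_nhds
    obtain ⟨k, hk⟩ := (hwt.eventually_mem hVn).exists
    have hkn : ((k:ℝ) + 1) ≠ 0 := by positivity
    set tk : AxB := ⟨0, 1 / (k + 1), hpos k⟩ with htk
    have e0 : tk * (x⁻¹ * y) * tk⁻¹ = (⟨(x⁻¹ * y).b / (k + 1), 1, one_pos⟩ : AxB) := by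
      ext
      · show (0 + 1 / ((k:ℝ)+1) * (x⁻¹*y).b) + (1/((k:ℝ)+1) * (x⁻¹*y).a) * (-0 / (1/((k:ℝ)+1)))
            = (x⁻¹ * y).b / ((k:ℝ)+1)
        field_simp
        ring
      · show (1/((k:ℝ)+1) * (x⁻¹*y).a) * (1 / (1/((k:ℝ)+1))) = 1
        rw [hna]
        field_simp
    have := hV (x * tk⁻¹) tk _ hk
    have e1 : x * tk⁻¹ * (⟨(x⁻¹ * y).b / (k + 1), 1, one_pos⟩ : AxB) * tk = y := by
      rw [← e0]
      have : x * tk⁻¹ * (tk * (x⁻¹ * y) * tk⁻¹) * tk = x * (x⁻¹ * y) := by group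
      rw [this, ← hyn]
    have e2 : x * tk⁻¹ * tk = x := by group
    rw [e1, e2] at this
    simpa [dist_comm] using this
  have h0 : dist (f x) (f y) ≤ 0 := le_of_forall_gt_imp_ge_of_dense fun ε hε => key ε hε
  exact eq_of_dist_eq_zero (le_antisymm h0 dist_nonneg)

end Stage1
section Stage2

variable {E F : Type*} [NormedAddCommGroup E] [NormedSpace ℂ E]
  [NormedAddCommGroup F] [NormedSpace ℂ F]

theorem weakspace_eval_continuous (φ : E →L[ℂ] ℂ) :
    Continuous fun x : WeakSpace ℂ E => φ ((toWeakSpace ℂ E).symm x) :=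
  WeakBilin.eval_continuous ((topDualPairing ℂ E).flip) φ

theorem weakspace_t2_s18 : T2Space (WeakSpace ℂ E) := by
  apply T2Space.of_injective_continuous
    (f := fun (x : WeakSpace ℂ E) (φ : E →L[ℂ] ℂ) => φ ((toWeakSpace ℂ E).symm x))
  · intro u v huv
    by_contra hne
    have hne' : (toWeakSpace ℂ E).symm u ≠ (toWeakSpace ℂ E).symm v := by
      intro h; exact hne ((toWeakSpace ℂ E).symm.injective h)
    obtain ⟨φ, hφ⟩ := SeparatingDual.exists_separating_of_ne (R := ℂ) hne'
    exact hφ (congrFun huv φ)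
  · exact continuous_pi fun φ => weakspace_eval_continuous φ

theorem relWeaklyCompact_transfer (T : E →L[ℂ] F) {A : Set E} {B : Set F}
    (hBA : B ⊆ T '' A) (hA : IsCompact (closure (toWeakSpace ℂ E '' A))) :
    IsCompact (closure (toWeakSpace ℂ F '' B)) := by
  haveI : T2Space (WeakSpace ℂ F) := weakspace_t2_s18
  have hC : IsCompact (WeakSpace.map T '' closure (toWeakSpace ℂ E '' A)) :=
    hA.image (WeakSpace.map T).continuous
  refine IsCompact.of_isClosed_subset hC isClosed_closure ?_
  apply closure_minimal ?_ hC.isClosed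
  rintro _ ⟨g, hgB, rfl⟩
  obtain ⟨a, haA, rfl⟩ := hBA hgB
  exact ⟨toWeakSpace ℂ E a, subset_closure ⟨a, haA, rfl⟩, rfl⟩

end Stage2
section Stage3

namespace AxB

theorem mem_N_iff (g : AxB) : g ∈ AxB.N ↔ g.a = 1 := Iff.rfl

/-- The `a`-coordinate descends to the quotient. -/
noncomputable def aQ : (AxB ⧸ AxB.N) → ℝ :=
  Quotient.lift (fun x : AxB => x.a) (by
    intro u v huv
    have h : u⁻¹ * v ∈ AxB.N := QuotientGroup.leftRel_apply.mp huv
    have h1 : (u⁻¹ * v).a = 1 := h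
    have hu := u.ha.ne'
    simp only [AxB.mul_a, AxB.inv_a] at h1
    field_simp at h1
    exact h1.symm)

@[simp] theorem aQ_mk (x : AxB) : aQ (QuotientGroup.mk x) = x.a := rfl

theorem aQ_pos (q : AxB ⧸ AxB.N) : 0 < aQ q := by
  induction q using Quotient.inductionOn with
  | h x => exact x.ha

theorem continuous_aQ : Continuous aQ :=
  Continuous.quotient_lift AxB.continuous_a _

/-- A continuous section of the quotient map. -/
noncomputable def sec (q : AxB ⧸ AxB.N) : AxB := ⟨0, aQ q, aQ_pos q⟩

theorem continuous_sec : Continuous sec := by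
  apply continuous_induced_rng.mpr
  exact continuous_const.prodMk continuous_aQ

@[simp] theorem mk_sec (q : AxB ⧸ AxB.N) : (QuotientGroup.mk (sec q) : AxB ⧸ AxB.N) = q := by
  induction q using Quotient.inductionOn with
  | h x =>
    have : (QuotientGroup.mk x : AxB ⧸ AxB.N) = Quotient.mk _ x := rfl
    rw [← this]
    apply (QuotientGroup.eq).mpr
    show ((sec (QuotientGroup.mk x))⁻¹ * x).a = 1
    have := x.ha.ne'
    simp only [AxB.mul_a, AxB.inv_a, sec, aQ_mk]
    field_simp

theorem quot_comm (u v : AxB ⧸ AxB.N) : u * v = v * u := by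
  induction u using Quotient.inductionOn with
  | h x =>
    induction v using Quotient.inductionOn with
    | h y =>
      show (QuotientGroup.mk x : AxB ⧸ AxB.N) * QuotientGroup.mk y
          = QuotientGroup.mk y * QuotientGroup.mk x
      rw [← QuotientGroup.mk_mul, ← QuotientGroup.mk_mul]
      apply (QuotientGroup.eq).mpr
      show ((x * y)⁻¹ * (y * x)).a = 1
      have hx := x.ha.ne'
      have hy := y.ha.ne'
      simp only [AxB.mul_a, AxB.inv_a]
      field_simp

noncomputable def secMap : C(AxB ⧸ AxB.N, AxB) := ⟨sec, continuous_sec⟩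

noncomputable def thetaMap : C(AxB, AxB ⧸ AxB.N) :=
  ⟨fun x => QuotientGroup.mk x, continuous_quot_mk⟩

end AxB

/-- Composition with a continuous map, as a continuous linear map on `C_b`. -/
noncomputable def compCLM {α β : Type*} [TopologicalSpace α] [TopologicalSpace β]
    (s : C(α, β)) : (β →ᵇ ℂ) →L[ℂ] (α →ᵇ ℂ) :=
  LinearMap.mkContinuous
    { toFun := fun g => g.compContinuous s
      map_add' := by intro g g'; ext z; simp
      map_smul' := by intro c g; ext z; simp }
    1 (fun g => by
      simpa using BoundedContinuousFunction.norm_compContinuous_le g s)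

@[simp] theorem compCLM_apply {α β : Type*} [TopologicalSpace α] [TopologicalSpace β]
    (s : C(α, β)) (g : β →ᵇ ℂ) (z : α) : compCLM s g z = g (s z) := rfl

end Stage3
section Stage4
open TopologicalSpace Set

namespace AxBNamioka

variable (S : Set (AxB →ᵇ ℂ))

local notation "E" => (AxB →ᵇ ℂ)

/-- The rational grid in `ℂ`. -/
noncomputable def cQ (p : ℚ × ℚ) : ℂ := ⟨(p.1 : ℝ), (p.2 : ℝ)⟩

theorem exists_cQ_near (w : ℂ) {δ : ℝ} (hδ : 0 < δ) : ∃ q : ℚ × ℚ, dist w (cQ q) ≤ δ := by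
  obtain ⟨q1, hq1⟩ := exists_rat_near w.re (half_pos hδ)
  obtain ⟨q2, hq2⟩ := exists_rat_near w.im (half_pos hδ)
  refine ⟨(q1, q2), ?_⟩
  rw [Complex.dist_eq]
  calc ‖w - cQ (q1, q2)‖ ≤ |(w - cQ (q1, q2)).re| + |(w - cQ (q1, q2)).im| :=
        Complex.norm_le_abs_re_add_abs_im _
    _ ≤ δ/2 + δ/2 := by
        apply add_le_add
        · exact le_of_lt (by simpa [cQ, abs_sub_comm] using hq1)
        · exact le_of_lt (by simpa [cQ, abs_sub_comm] using hq2)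
    _ = δ := by ring

theorem equicont_point
    (hS : IsCompact (closure (toWeakSpace ℂ (AxB →ᵇ ℂ) '' S))) :
    ∃ z₀ : AxB, ∀ ε : ℝ, 0 < ε → ∃ V ∈ nhds z₀,
      ∀ g ∈ S, ∀ z ∈ V, dist (g z) (g z₀) ≤ ε := by
  classical
  set Kset : Set (WeakSpace ℂ E) := closure (toWeakSpace ℂ E '' S) with hKset
  haveI hKcs : CompactSpace ↥Kset := isCompact_iff_compactSpace.mp hS
  -- view elements of Kset as bounded continuous functions
  set Φ : ↥Kset → (AxB →ᵇ ℂ) := fun κ => (toWeakSpace ℂ E).symm κ.1 with hΦ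
  have hΦev : ∀ z : AxB, Continuous fun κ : ↥Kset => Φ κ z := by
    intro z
    have h1 : Continuous fun x : WeakSpace ℂ E =>
        (BoundedContinuousFunction.evalCLM ℂ z : E →L[ℂ] ℂ) ((toWeakSpace ℂ E).symm x) :=
      weakspace_eval_continuous _
    exact h1.comp continuous_subtype_val
  -- metrizability of Kset
  obtain ⟨D, hDc, hDd⟩ := TopologicalSpace.exists_countable_dense AxB
  haveI : Countable ↥D := hDc.to_subtype
  have hΨinj : Function.Injective (fun (κ : ↥Kset) (j : ↥D) => Φ κ j.1) := by
    intro κ κ' h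
    have : ⇑(Φ κ) = ⇑(Φ κ') := by
      apply Continuous.ext_on hDd (Φ κ).continuous (Φ κ').continuous
      intro z hz
      exact congrFun h ⟨z, hz⟩
    have hfun : Φ κ = Φ κ' := BoundedContinuousFunction.ext fun z => congrFun this z
    have : κ.1 = κ'.1 := (toWeakSpace ℂ E).symm.injective hfun
    exact Subtype.ext this
  have hΨcont : Continuous (fun (κ : ↥Kset) (j : ↥D) => Φ κ j.1) :=
    continuous_pi fun j => hΦev j.1
  haveI : MetrizableSpace ↥Kset :=
    (hΨcont.isClosedEmbedding hΨinj).toIsEmbedding.metrizableSpace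
  letI : MetricSpace ↥Kset := TopologicalSpace.metrizableSpaceMetric ↥Kset
  have hKtb : TotallyBounded (Set.univ : Set ↥Kset) := isCompact_univ.totallyBounded
  -- finite nets
  have hnets : ∀ n : ℕ, ∃ t : Set ↥Kset, t.Finite ∧
      Set.univ ⊆ ⋃ y ∈ t, Metric.ball y (1 / (n + 1)) := by
    intro n
    exact Metric.totallyBounded_iff.mp hKtb (1 / (n + 1)) (by positivity)
  choose net hnetfin hnetcover using hnets
  -- the density claim
  have main : ∀ ε : ℝ, 0 < ε → ∀ U : Set AxB, IsOpen U → U.Nonempty →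
      ∃ V : Set AxB, IsOpen V ∧ V.Nonempty ∧ V ⊆ U ∧
        ∀ z ∈ V, ∀ z' ∈ V, ∀ κ : ↥Kset, dist (Φ κ z) (Φ κ z') ≤ ε := by
    intro ε hε U hU hUne
    set ε4 : ℝ := ε / 4 with hε4
    have hε4pos : 0 < ε4 := by positivity
    -- closed sets C n
    set C : ℕ → Set AxB := fun n =>
      ⋂ (κ : ↥Kset), ⋂ (κ' : ↥Kset),
        {z : AxB | dist κ κ' ≤ 1 / (n + 1) → dist (Φ κ z) (Φ κ' z) ≤ ε4} with hC
    have hCclosed : ∀ n, IsClosed (C n) := by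
      intro n
      apply isClosed_iInter; intro κ; apply isClosed_iInter; intro κ'
      by_cases h : dist κ κ' ≤ 1 / (n + 1 : ℝ)
      · have : {z : AxB | dist κ κ' ≤ 1 / (n + 1 : ℝ) → dist (Φ κ z) (Φ κ' z) ≤ ε4}
            = {z : AxB | dist (Φ κ z) (Φ κ' z) ≤ ε4} := by
          ext z; simp only [Set.mem_setOf_eq]
          exact ⟨fun hi => hi h, fun hp _ => hp⟩
        rw [this]
        exact isClosed_le (((Φ κ).continuous.dist (Φ κ').continuous)) continuous_const
      · have : {z : AxB | dist κ κ' ≤ 1 / (n + 1 : ℝ) → dist (Φ κ z) (Φ κ' z) ≤ ε4}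
            = Set.univ := by
          ext z; simp only [Set.mem_setOf_eq, Set.mem_univ, iff_true]
          intro hd; exact absurd hd h
        rw [this]
        exact isClosed_univ
    have hCcover : ∀ z : AxB, ∃ n, z ∈ C n := by
      intro z
      have hcont : Continuous fun κ : ↥Kset => Φ κ z := hΦev z
      have huc : UniformContinuous fun κ : ↥Kset => Φ κ z :=
        CompactSpace.uniformContinuous_of_continuous hcont
      rw [Metric.uniformContinuous_iff] at huc
      obtain ⟨δ, hδpos, hδ⟩ := huc ε4 hε4pos
      obtain ⟨n, hn⟩ := exists_nat_one_div_lt hδpos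
      refine ⟨n, ?_⟩
      simp only [hC, Set.mem_iInter, Set.mem_setOf_eq]
      intro κ κ' hd
      have : dist κ κ' < δ := lt_of_le_of_lt hd hn
      exact le_of_lt (hδ this)
    -- index type for Baire
    have hfinsub : ∀ n, Finite ↥(net n) := fun n => (hnetfin n).to_subtype
    let I := Σ n : ℕ, (↥(net n) → ℚ × ℚ)
    haveI : ∀ n, Finite ↥(net n) := hfinsub
    haveI : Countable I := by infer_instance
    set Qs : I → Set AxB := fun i =>
      (C i.1 ∩ ⋂ (j : ↥(net i.1)), {z : AxB | dist (Φ j.1 z) (cQ (i.2 j)) ≤ ε4}) ∪ Uᶜ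
      with hQs
    have hQsclosed : ∀ i, IsClosed (Qs i) := by
      intro i
      apply IsClosed.union
      · apply (hCclosed i.1).inter
        apply isClosed_iInter; intro j
        exact isClosed_le ((Φ j.1).continuous.dist continuous_const) continuous_const
      · exact hU.isClosed_compl
    have hQscover : ⋃ i, Qs i = Set.univ := by
      apply Set.eq_univ_of_forall
      intro z
      by_cases hz : z ∈ U
      · obtain ⟨n, hn⟩ := hCcover z
        have hv : ∀ j : ↥(net n), ∃ q : ℚ × ℚ, dist (Φ j.1 z) (cQ q) ≤ ε4 :=
          fun j => exists_cQ_near _ hε4pos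
        choose v hvq using hv
        refine Set.mem_iUnion.mpr ⟨⟨n, v⟩, Or.inl ⟨hn, ?_⟩⟩
        exact Set.mem_iInter.mpr fun j => hvq j
      · exact Set.mem_iUnion.mpr ⟨⟨0, fun _ => (0, 0)⟩, Or.inr hz⟩
    have hdense := dense_iUnion_interior_of_closed hQsclosed hQscover
    obtain ⟨z₁, hz₁U, hz₁i⟩ := hdense.inter_open_nonempty U hU hUne
    obtain ⟨i, hz₁int⟩ := Set.mem_iUnion.mp hz₁i
    refine ⟨U ∩ interior (Qs i), hU.inter isOpen_interior, ⟨z₁, hz₁U, hz₁int⟩,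
      Set.inter_subset_left, ?_⟩
    intro z hz z' hz' κ
    have hzQ : z ∈ C i.1 ∩ ⋂ (j : ↥(net i.1)), {w : AxB | dist (Φ j.1 w) (cQ (i.2 j)) ≤ ε4} := by
      have := interior_subset hz.2
      rcases this with h | h
      · exact h
      · exact absurd hz.1 h
    have hz'Q : z' ∈ C i.1 ∩ ⋂ (j : ↥(net i.1)), {w : AxB | dist (Φ j.1 w) (cQ (i.2 j)) ≤ ε4} := by
      have := interior_subset hz'.2
      rcases this with h | h
      · exact h
      · exact absurd hz'.1 h
    -- find a net point near κ
    have := hnetcover i.1 (Set.mem_univ κ)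
    simp only [Set.mem_iUnion] at this
    obtain ⟨g₀, hg₀net, hg₀ball⟩ := this
    have hdistκ : dist κ g₀ ≤ 1 / (i.1 + 1 : ℝ) := le_of_lt (Metric.mem_ball.mp hg₀ball)
    have h1 : dist (Φ κ z) (Φ g₀ z) ≤ ε4 := by
      have := Set.mem_iInter.mp (Set.mem_iInter.mp hzQ.1 κ) g₀
      exact this hdistκ
    have h4 : dist (Φ g₀ z') (Φ κ z') ≤ ε4 := by
      have := Set.mem_iInter.mp (Set.mem_iInter.mp hz'Q.1 κ) g₀
      exact dist_comm (Φ κ z') (Φ g₀ z') ▸ this hdistκ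
    have h2 : dist (Φ g₀ z) (cQ (i.2 ⟨g₀, hg₀net⟩)) ≤ ε4 :=
      Set.mem_iInter.mp hzQ.2 ⟨g₀, hg₀net⟩
    have h3 : dist (cQ (i.2 ⟨g₀, hg₀net⟩)) (Φ g₀ z') ≤ ε4 := by
      have := Set.mem_iInter.mp hz'Q.2 ⟨g₀, hg₀net⟩
      exact dist_comm (Φ g₀ z') (cQ (i.2 ⟨g₀, hg₀net⟩)) ▸ this
    calc dist (Φ κ z) (Φ κ z')
        ≤ dist (Φ κ z) (Φ g₀ z) + dist (Φ g₀ z) (cQ (i.2 ⟨g₀, hg₀net⟩))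
          + dist (cQ (i.2 ⟨g₀, hg₀net⟩)) (Φ g₀ z') + dist (Φ g₀ z') (Φ κ z') :=
          dist_triangle4 _ _ _ _ |>.trans (by
            gcongr
            exact dist_triangle _ _ _)
      _ ≤ ε4 + ε4 + ε4 + ε4 := by gcongr
      _ = ε := by rw [hε4]; ring
  -- open dense oscillation sets
  set W : ℝ → Set AxB := fun ε =>
    ⋃₀ {V : Set AxB | IsOpen V ∧ ∀ z ∈ V, ∀ z' ∈ V, ∀ κ : ↥Kset, dist (Φ κ z) (Φ κ z') ≤ ε}
    with hW
  have hWopen : ∀ ε, IsOpen (W ε) := by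
    intro ε
    exact isOpen_sUnion fun V hV => hV.1
  have hWdense : ∀ ε : ℝ, 0 < ε → Dense (W ε) := by
    intro ε hε
    rw [dense_iff_inter_open]
    intro U hU hUne
    obtain ⟨V, hVopen, hVne, hVU, hVosc⟩ := main ε hε U hU hUne
    obtain ⟨z, hz⟩ := hVne
    exact ⟨z, hVU hz, Set.mem_sUnion.mpr ⟨V, ⟨hVopen, hVosc⟩, hz⟩⟩
  have hGδ : Dense (⋂ m : ℕ, W (1 / (m + 1))) :=
    dense_iInter_of_isOpen (fun m => hWopen _) (fun m => hWdense _ (by positivity))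
  obtain ⟨z₀, hz₀⟩ := hGδ.nonempty
  refine ⟨z₀, ?_⟩
  intro ε hε
  obtain ⟨m, hm⟩ := exists_nat_one_div_lt hε
  have hz₀m : z₀ ∈ W (1 / (m + 1)) := Set.mem_iInter.mp hz₀ m
  obtain ⟨V, ⟨hVopen, hVosc⟩, hz₀V⟩ := hz₀m
  refine ⟨V, hVopen.mem_nhds hz₀V, ?_⟩
  intro g hg z hz
  set κ : ↥Kset := ⟨toWeakSpace ℂ E g, subset_closure ⟨g, hg, rfl⟩⟩ with hκ
  have hΦκ : Φ κ = g := (toWeakSpace ℂ E).symm_apply_apply g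
  have := hVosc z hz z₀ hz₀V κ
  rw [hΦκ] at this
  exact this.trans (le_of_lt hm)

end AxBNamioka

end Stage4
section Stage5

/-- A weakly-strictly-almost-periodic function has an equicontinuous-at-1 double orbit. -/
theorem AxB.H_of_WS (f : AxB →ᵇ ℂ) (hf : IsWS f) :
    ∀ ε : ℝ, 0 < ε → ∃ V ∈ nhds (1 : AxB),
      ∀ x y : AxB, ∀ w ∈ V, dist (f (x * w * y)) (f (x * y)) ≤ ε := by
  obtain ⟨z₀, hz₀⟩ := AxBNamioka.equicont_point (doubleOrbit f) hf
  intro ε hε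
  obtain ⟨V, hVn, hV⟩ := hz₀ ε hε
  have hcont : Continuous fun w : AxB => w * z₀ := continuous_id.mul continuous_const
  refine ⟨(fun w : AxB => w * z₀) ⁻¹' V, ?_, ?_⟩
  · apply hcont.continuousAt.preimage_mem_nhds
    rwa [one_mul]
  · intro x y w hw
    have hg : biTranslate x (z₀⁻¹ * y) f ∈ doubleOrbit f := ⟨x, z₀⁻¹ * y, rfl⟩
    have h1 := hV _ hg (w * z₀) hw
    have e1 : x * (w * z₀) * (z₀⁻¹ * y) = x * w * y := by group
    have e2 : x * z₀ * (z₀⁻¹ * y) = x * y := by group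
    simpa [biTranslate_apply, e1, e2] using h1

/-- Derive equicontinuity at 1 from `IsUCS`. -/
theorem AxB.H_of_UCS (f : AxB →ᵇ ℂ) (hf : IsUCS f) :
    ∀ ε : ℝ, 0 < ε → ∃ V ∈ nhds (1 : AxB),
      ∀ x y : AxB, ∀ w ∈ V, dist (f (x * w * y)) (f (x * y)) ≤ ε := by
  intro ε hε
  have h1 := hf 1 {p : ℂ × ℂ | dist p.1 p.2 < ε} (Metric.dist_mem_uniformity hε)
  rw [Filter.eventually_iff] at h1
  refine ⟨_, h1, ?_⟩
  intro x y w hw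
  have h2 : dist (f (x * 1 * y)) (f (x * w * y)) < ε := hw (x, y)
  rw [mul_one, dist_comm] at h2
  exact le_of_lt h2

end Stage5
section Stage6

open AxB

theorem stmt18_forward (f : AxB →ᵇ ℂ) (hws : IsWS f) :
    ∃ h : (AxB ⧸ AxB.N) →ᵇ ℂ, IsWAP h ∧ ∀ x : AxB, f x = h (QuotientGroup.mk x) := by
  have hc : ∀ x y : AxB, x⁻¹ * y ∈ AxB.N → f x = f y :=
    AxB.const_of_equicont_one f (AxB.H_of_WS f hws)
  refine ⟨f.compContinuous secMap, ?_, ?_⟩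
  · -- IsWAP
    show RelWeaklyCompact (leftOrbit (f.compContinuous secMap))
    apply relWeaklyCompact_transfer (compCLM secMap) ?_ hws
    rintro g ⟨u, rfl⟩
    obtain ⟨x, rfl⟩ := QuotientGroup.mk_surjective u
    refine ⟨biTranslate x 1 f, ⟨x, 1, rfl⟩, ?_⟩
    ext q
    show f (x * sec q * 1) = (f.compContinuous secMap) ((QuotientGroup.mk x) * q * 1)
    rw [mul_one, mul_one]
    show f (x * sec q) = f (sec ((QuotientGroup.mk x) * q))
    apply hc
    apply (QuotientGroup.eq).mp
    have h1 : (QuotientGroup.mk (x * sec q) : AxB ⧸ AxB.N)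
        = QuotientGroup.mk x * QuotientGroup.mk (sec q) := rfl
    rw [h1, mk_sec, mk_sec]
  · intro x
    show f x = f (sec (QuotientGroup.mk x))
    apply hc
    show (x⁻¹ * sec (QuotientGroup.mk x)).a = 1
    have := x.ha.ne'
    simp only [AxB.mul_a, AxB.inv_a, sec, aQ_mk]
    field_simp

theorem stmt18_backward (f : AxB →ᵇ ℂ) (h : (AxB ⧸ AxB.N) →ᵇ ℂ) (hWAP : IsWAP h)
    (hfh : ∀ x : AxB, f x = h (QuotientGroup.mk x)) : IsWS f := by
  show RelWeaklyCompact (doubleOrbit f)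
  apply relWeaklyCompact_transfer (compCLM thetaMap) ?_ hWAP
  rintro g ⟨x, y, rfl⟩
  refine ⟨biTranslate (QuotientGroup.mk x * QuotientGroup.mk y) 1 h,
    ⟨QuotientGroup.mk x * QuotientGroup.mk y, rfl⟩, ?_⟩
  ext z
  show h (QuotientGroup.mk x * QuotientGroup.mk y * QuotientGroup.mk z * 1) = f (x * z * y)
  rw [mul_one, hfh (x * z * y)]
  have h1 : (QuotientGroup.mk (x * z * y) : AxB ⧸ AxB.N)
      = QuotientGroup.mk x * QuotientGroup.mk z * QuotientGroup.mk y := rfl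
  rw [h1, mul_assoc, mul_assoc, quot_comm (QuotientGroup.mk y) (QuotientGroup.mk z)]

end Stage6


/-- For the `ax + b` group `G₃` and its closed normal subgroup
`N = {(b, 1) : b ∈ ℝ}` with quotient map `θ : G₃ → G₃/N`: (1) every `f ∈ UCS(G₃)` is constant
on each coset of `N`; (2) `WS(G₃) = {h ∘ θ : h ∈ WAP(G₃/N)}`. -/
theorem stmt18 :
    (∀ f : AxB →ᵇ ℂ, IsUCS f → ∀ x y : AxB, x⁻¹ * y ∈ AxB.N → f x = f y) ∧
    ({f : AxB →ᵇ ℂ | IsWS f} =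
      {f : AxB →ᵇ ℂ | ∃ h : (AxB ⧸ AxB.N) →ᵇ ℂ, IsWAP h ∧
        ∀ x : AxB, f x = h (QuotientGroup.mk x)}) := by
  constructor
  · intro f hf
    exact AxB.const_of_equicont_one f (AxB.H_of_UCS f hf)
  · ext f
    simp only [Set.mem_setOf_eq]
    constructor
    · exact stmt18_forward f
    · rintro ⟨h, hWAP, hfh⟩
      exact stmt18_backward f h hWAP hfh
end

section
/- Every function in UCS(SL(2, ℝ)) is constant; that is, if f is a bounded continuous complex-valued function on the special linear group SL(2, ℝ) (with its usual topology as a closed subgroup of GL(2, ℝ)) whose double orbit O(f) = {z ↦ f(xzy) : x, y ∈ SL(2, ℝ)} is an equicontinuous family, then f is a constant function. -/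
open BoundedContinuousFunction Topology Filter MeasureTheory

open Matrix Topology

/-- The topology on `SL(2, ℝ)` inherited from the space of `2 × 2` real matrices. -/
instance : TopologicalSpace (Matrix.SpecialLinearGroup (Fin 2) ℝ) :=
  TopologicalSpace.induced
    (fun A => (A : Matrix (Fin 2) (Fin 2) ℝ)) inferInstance

theorem SL2.continuous_coe :
    Continuous fun A : Matrix.SpecialLinearGroup (Fin 2) ℝ =>
      (A : Matrix (Fin 2) (Fin 2) ℝ) := continuous_induced_dom

instance : IsTopologicalGroup (Matrix.SpecialLinearGroup (Fin 2) ℝ) where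
  continuous_mul := by
    apply continuous_induced_rng.mpr
    have : Continuous fun p : Matrix.SpecialLinearGroup (Fin 2) ℝ ×
        Matrix.SpecialLinearGroup (Fin 2) ℝ =>
        ((p.1 : Matrix (Fin 2) (Fin 2) ℝ) * (p.2 : Matrix (Fin 2) (Fin 2) ℝ)) :=
      (SL2.continuous_coe.comp continuous_fst).mul (SL2.continuous_coe.comp continuous_snd)
    simp only [Function.comp_def, Matrix.SpecialLinearGroup.coe_mul]
    exact this
  continuous_inv := by
    apply continuous_induced_rng.mpr
    have : Continuous fun A : Matrix.SpecialLinearGroup (Fin 2) ℝ =>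
        ((A : Matrix (Fin 2) (Fin 2) ℝ)).adjugate := SL2.continuous_coe.matrix_adjugate
    simp only [Function.comp_def, Matrix.SpecialLinearGroup.coe_inv]
    exact this

namespace SL2Aux

local notation "SL2" => Matrix.SpecialLinearGroup (Fin 2) ℝ

/-- Upper unipotent shear. -/
noncomputable def u (t : ℝ) : SL2 :=
  ⟨!![1, t; 0, 1], by simp [Matrix.det_fin_two_of]⟩

/-- Lower unipotent shear. -/
noncomputable def l (t : ℝ) : SL2 :=
  ⟨!![1, 0; t, 1], by simp [Matrix.det_fin_two_of]⟩

/-- Diagonal element. -/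
noncomputable def d (a : ℝ) (ha : a ≠ 0) : SL2 :=
  ⟨!![a, 0; 0, a⁻¹], by simp [Matrix.det_fin_two_of, mul_inv_cancel₀ ha]⟩

theorem u_zero : u 0 = 1 := by
  apply Subtype.ext
  simp only [u, Matrix.SpecialLinearGroup.coe_one]
  ext i j
  fin_cases i <;> fin_cases j <;> simp [Matrix.one_fin_two]

theorem l_zero : l 0 = 1 := by
  apply Subtype.ext
  simp only [l, Matrix.SpecialLinearGroup.coe_one]
  ext i j
  fin_cases i <;> fin_cases j <;> simp [Matrix.one_fin_two]

theorem l_mul_l (t s : ℝ) : l t * l s = l (t + s) := by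
  apply Subtype.ext
  simp only [Matrix.SpecialLinearGroup.coe_mul]
  simp only [l, Matrix.SpecialLinearGroup.coe_mul]
  ext i j
  fin_cases i <;> fin_cases j <;>
    simp [Matrix.mul_apply, Fin.sum_univ_two] <;> ring

theorem d_mul_u (a : ℝ) (ha : a ≠ 0) (t : ℝ) :
    d a ha * u t = u (a ^ 2 * t) * d a ha := by
  apply Subtype.ext
  simp only [Matrix.SpecialLinearGroup.coe_mul]
  simp only [d, u, Matrix.SpecialLinearGroup.coe_mul]
  ext i j
  fin_cases i <;> fin_cases j <;>
    simp [Matrix.mul_apply, Fin.sum_univ_two] <;> field_simp <;> ring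

theorem d_mul_l (a : ℝ) (ha : a ≠ 0) (t : ℝ) :
    d a⁻¹ (inv_ne_zero ha) * l t = l (a ^ 2 * t) * d a⁻¹ (inv_ne_zero ha) := by
  apply Subtype.ext
  simp only [Matrix.SpecialLinearGroup.coe_mul]
  simp only [d, l, Matrix.SpecialLinearGroup.coe_mul]
  ext i j
  fin_cases i <;> fin_cases j <;>
    simp [Matrix.mul_apply, Fin.sum_univ_two] <;> field_simp <;> ring

theorem u_conj (a : ℝ) (ha : a ≠ 0) (t : ℝ) :
    d a ha * u t * (d a ha)⁻¹ = u (a ^ 2 * t) := by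
  rw [d_mul_u a ha t, mul_inv_cancel_right]

theorem l_conj (a : ℝ) (ha : a ≠ 0) (t : ℝ) :
    d a⁻¹ (inv_ne_zero ha) * l t * (d a⁻¹ (inv_ne_zero ha))⁻¹ = l (a ^ 2 * t) := by
  rw [d_mul_l a ha t, mul_inv_cancel_right]

theorem continuous_u : Continuous u := by
  apply continuous_induced_rng.mpr
  apply continuous_matrix
  intro i j
  fin_cases i <;> fin_cases j <;> simp [u] <;> fun_prop

theorem continuous_l : Continuous l := by
  apply continuous_induced_rng.mpr
  apply continuous_matrix
  intro i j
  fin_cases i <;> fin_cases j <;> simp [l] <;> fun_prop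

/-- Decomposition when the lower-left entry is nonzero. -/
theorem decomp_of_ne_zero (g : SL2) (c : ℝ)
    (hgc : (g : Matrix (Fin 2) (Fin 2) ℝ) 1 0 = c)
    (hc : c ≠ 0) : ∃ t₁ t₂ : ℝ, g = u t₁ * l c * u t₂ := by
  have hdet : (g : Matrix (Fin 2) (Fin 2) ℝ) 0 0 * (g : Matrix (Fin 2) (Fin 2) ℝ) 1 1
      - (g : Matrix (Fin 2) (Fin 2) ℝ) 0 1 * c = 1 := by
    have := g.prop
    rw [Matrix.det_fin_two] at this
    rw [← hgc]
    exact this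
  refine ⟨((g : Matrix (Fin 2) (Fin 2) ℝ) 0 0 - 1) / c,
    ((g : Matrix (Fin 2) (Fin 2) ℝ) 1 1 - 1) / c, ?_⟩
  apply Subtype.ext
  simp only [Matrix.SpecialLinearGroup.coe_mul]
  ext i j
  fin_cases i <;> fin_cases j
  · simp [u, l, Matrix.mul_apply, Fin.sum_univ_two, hgc]; field_simp; ring
  · simp [u, l, Matrix.mul_apply, Fin.sum_univ_two, hgc]; field_simp; linarith [hdet]
  · simp [u, l, Matrix.mul_apply, Fin.sum_univ_two, hgc]
  · simp [u, l, Matrix.mul_apply, Fin.sum_univ_two, hgc]; field_simp; ring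

/-- Every element of SL(2,ℝ) is a product of four shears. -/
theorem decomp (g : SL2) :
    ∃ t₁ c t₂ s : ℝ, g = u t₁ * l c * u t₂ * l s := by
  by_cases hc : (g : Matrix (Fin 2) (Fin 2) ℝ) 1 0 ≠ 0
  · obtain ⟨t₁, t₂, h⟩ := decomp_of_ne_zero g _ rfl hc
    exact ⟨t₁, (g : Matrix (Fin 2) (Fin 2) ℝ) 1 0, t₂, 0, by rw [l_zero, mul_one]; exact h⟩
  · push_neg at hc
    have hdet : (g : Matrix (Fin 2) (Fin 2) ℝ) 0 0 * (g : Matrix (Fin 2) (Fin 2) ℝ) 1 1 = 1 := by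
      have := g.prop
      rw [Matrix.det_fin_two, hc] at this
      simpa using this
    have hd : (g : Matrix (Fin 2) (Fin 2) ℝ) 1 1 ≠ 0 := by
      intro h0
      rw [h0, mul_zero] at hdet
      exact zero_ne_one hdet
    have heq : ((g * l 1 : SL2) : Matrix (Fin 2) (Fin 2) ℝ) 1 0 =
        (g : Matrix (Fin 2) (Fin 2) ℝ) 1 1 := by
      rw [Matrix.SpecialLinearGroup.coe_mul]
      simp [l, Matrix.SpecialLinearGroup.coe_mul, Matrix.mul_apply,
        Fin.sum_univ_two, hc]
    obtain ⟨t₁, t₂, h⟩ := decomp_of_ne_zero (g * l 1) _ heq hd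
    refine ⟨t₁, (g : Matrix (Fin 2) (Fin 2) ℝ) 1 1, t₂, -1, ?_⟩
    have hgg : g = (g * l 1) * l (-1) := by
      rw [mul_assoc, l_mul_l]
      norm_num [l_zero]
    conv_lhs => rw [hgg, h]

end SL2Aux

/-- Every function in `UCS(SL(2, ℝ))` is constant: if the double orbit of a
bounded continuous function on `SL(2, ℝ)` is equicontinuous, then the function is constant. -/
theorem stmt19 (f : Matrix.SpecialLinearGroup (Fin 2) ℝ →ᵇ ℂ) (hf : IsUCS f) :
    ∃ c : ℂ, ∀ x : Matrix.SpecialLinearGroup (Fin 2) ℝ, f x = c := by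
  classical
  open SL2Aux in
  refine ⟨f 1, fun g => ?_⟩
  have key : ∀ ε > (0 : ℝ), dist (f g) (f 1) ≤ 4 * ε := by
    intro ε hε
    have h1 := hf 1
    rw [Metric.equicontinuousAt_iff_right] at h1
    obtain ⟨U, hU, hUP⟩ := Filter.eventually_iff_exists_mem.mp (h1 ε hε)
    -- the key property of elements of U
    set P : Matrix.SpecialLinearGroup (Fin 2) ℝ → Prop := fun z => ∀ x y, dist (f (x * y)) (f (x * z * y)) ≤ ε with hPdef
    have hPU : ∀ z ∈ U, P z := by
      intro z hz x y
      have := hUP z hz (x, y)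
      simp only [mul_one] at this ⊢
      exact this.le
    have hP1 : P 1 := by
      intro x y
      simpa using hε.le
    have hPconj : ∀ z, P z → ∀ c, P (c * z * c⁻¹) := by
      intro z hz c x y
      have h := hz (x * c) (c⁻¹ * y)
      have e1 : x * (c * z * c⁻¹) * y = x * c * z * (c⁻¹ * y) := by group
      have e2 : x * y = x * c * (c⁻¹ * y) := by group
      rw [e1, e2]
      exact h
    -- P holds for all upper shears
    have hPu : ∀ t : ℝ, P (u t) := by
      have hmem : u ⁻¹' U ∈ 𝓝 (0 : ℝ) :=
        continuous_u.continuousAt.preimage_mem_nhds (by rw [u_zero]; exact hU)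
      obtain ⟨δ, hδ, hball⟩ := Metric.mem_nhds_iff.mp hmem
      intro t
      by_cases ht : t = 0
      · rw [ht, u_zero]; exact hP1
      · have hs : ∃ s : ℝ, s ≠ 0 ∧ |s| < δ ∧ 0 < t / s := by
          rcases lt_trichotomy t 0 with h | h | h
          · refine ⟨-(δ / 2), by simp [ne_of_gt (half_pos hδ)], by
              rw [abs_neg, abs_of_pos (half_pos hδ)]; linarith, ?_⟩
            exact div_pos_of_neg_of_neg h (by linarith)
          · exact absurd h ht
          · exact ⟨δ / 2, ne_of_gt (half_pos hδ), by
              rw [abs_of_pos (half_pos hδ)]; linarith, div_pos h (half_pos hδ)⟩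
        obtain ⟨s, hs0, hsδ, hts⟩ := hs
        have hsU : u s ∈ U := hball (by simpa [Real.dist_eq] using hsδ)
        have ha : Real.sqrt (t / s) ≠ 0 := ne_of_gt (Real.sqrt_pos.mpr hts)
        have hconj := hPconj _ (hPU _ hsU) (d (Real.sqrt (t / s)) ha)
        rw [u_conj (Real.sqrt (t / s)) ha s] at hconj
        have : Real.sqrt (t / s) ^ 2 * s = t := by
          rw [Real.sq_sqrt hts.le]
          field_simp
        rwa [this] at hconj
    -- P holds for all lower shears
    have hPl : ∀ t : ℝ, P (l t) := by
      have hmem : l ⁻¹' U ∈ 𝓝 (0 : ℝ) :=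
        continuous_l.continuousAt.preimage_mem_nhds (by rw [l_zero]; exact hU)
      obtain ⟨δ, hδ, hball⟩ := Metric.mem_nhds_iff.mp hmem
      intro t
      by_cases ht : t = 0
      · rw [ht, l_zero]; exact hP1
      · have hs : ∃ s : ℝ, s ≠ 0 ∧ |s| < δ ∧ 0 < t / s := by
          rcases lt_trichotomy t 0 with h | h | h
          · refine ⟨-(δ / 2), by simp [ne_of_gt (half_pos hδ)], by
              rw [abs_neg, abs_of_pos (half_pos hδ)]; linarith, ?_⟩
            exact div_pos_of_neg_of_neg h (by linarith)
          · exact absurd h ht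
          · exact ⟨δ / 2, ne_of_gt (half_pos hδ), by
              rw [abs_of_pos (half_pos hδ)]; linarith, div_pos h (half_pos hδ)⟩
        obtain ⟨s, hs0, hsδ, hts⟩ := hs
        have hsU : l s ∈ U := hball (by simpa [Real.dist_eq] using hsδ)
        have ha : Real.sqrt (t / s) ≠ 0 := ne_of_gt (Real.sqrt_pos.mpr hts)
        have hconj := hPconj _ (hPU _ hsU)
          (d (Real.sqrt (t / s))⁻¹ (inv_ne_zero ha))
        rw [l_conj (Real.sqrt (t / s)) ha s] at hconj
        have : Real.sqrt (t / s) ^ 2 * s = t := by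
          rw [Real.sq_sqrt hts.le]
          field_simp
        rwa [this] at hconj
    -- one-step estimate
    have step : ∀ (x z : Matrix.SpecialLinearGroup (Fin 2) ℝ), P z → dist (f (x * z)) (f x) ≤ ε := by
      intro x z hz
      have := hz x 1
      simp only [mul_one] at this
      rw [dist_comm]
      exact this
    obtain ⟨t₁, c, t₂, s, hdec⟩ := SL2Aux.decomp g
    have d1 : dist (f (u t₁ * l c * u t₂ * l s)) (f (u t₁ * l c * u t₂)) ≤ ε :=
      step _ _ (hPl s)
    have d2 : dist (f (u t₁ * l c * u t₂)) (f (u t₁ * l c)) ≤ ε := step _ _ (hPu t₂)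
    have d3 : dist (f (u t₁ * l c)) (f (u t₁)) ≤ ε := step _ _ (hPl c)
    have d4 : dist (f (u t₁)) (f 1) ≤ ε := by
      have := step 1 (u t₁) (hPu t₁)
      simpa using this
    have T1 := dist_triangle4 (f (u t₁ * l c * u t₂ * l s)) (f (u t₁ * l c * u t₂))
      (f (u t₁ * l c)) (f (u t₁))
    have T2 := dist_triangle (f (u t₁ * l c * u t₂ * l s)) (f (u t₁)) (f 1)
    rw [hdec]
    linarith
  have h0 : dist (f g) (f 1) ≤ 0 := by
    refine le_of_forall_pos_le_add fun ε hε => ?_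
    have := key (ε / 4) (by linarith)
    linarith
  exact dist_le_zero.mp h0
end
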